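/- arXiv:1509.06349 — 6 statements merged into one kernel-verified Lean document; each statement's English description precedes it below -/
import Mathlib

section
/- Let α be irrational with convergent denominators q_k. If n is an integer with 0 < n < q_{k,ℓ} (for k ≥ 2 and 0 < ℓ ≤ a_k) and ‖nα‖ < ‖q_{k,ℓ-1}α‖, then n = m·q_{k-1} for some integer m with 1 ≤ m ≤ min{ℓ, a_k − ℓ + 1}. -/
/-- The Gauss-map iterates of `α`: `cfX α 0 = α`, `cfX α (n+1) = 1/{cfX α n}`. -/
noncomputable def cfX (α : ℝ) : ℕ → ℝ
  | 0 => α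
  | n + 1 => (Int.fract (cfX α n))⁻¹

/-- The partial quotients of the continued fraction expansion of `α`. -/
noncomputable def cfA (α : ℝ) (n : ℕ) : ℤ := ⌊cfX α n⌋

/-- The denominators of the convergents of `α`: `q₀ = 1`, `q₁ = a₁`,
`q_k = a_k q_{k-1} + q_{k-2}`. -/
noncomputable def cfQ (α : ℝ) : ℕ → ℤ
  | 0 => 1
  | 1 => cfA α 1
  | n + 2 => cfA α (n + 2) * cfQ α (n + 1) + cfQ α n

/-- `‖x‖ = min({x}, 1 - {x})`, the distance from `x` to the nearest integer. -/
noncomputable def dni (x : ℝ) : ℝ := min (Int.fract x) (1 - Int.fract x)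

/-!
The two integer vectors `(q_{k-1}, p_{k-1})` and `(q_{k,ℓ-1}, p_{k,ℓ-1})` span `ℤ²`, and their
errors `qα - p` have opposite signs and sizes `η := η_{k-1}` and `E := η_{k-2} - (ℓ-1) η_{k-1}`.
Writing `(n, round (nα)) = x·(q_{k-1}, p_{k-1}) + y·(q_{k,ℓ-1}, p_{k,ℓ-1})`, the error of `n` is
`±(xη - yE)`. It is smaller than `E` only if `y = 0`: otherwise either `x` and `y` have opposite
signs, so the two terms add up, or they have the same sign, which puts `n` outside `(0, q_{k,ℓ})`.
So `n = x q_{k-1}`, and `xη < E` together with `n < q_{k,ℓ}` bounds `x`.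
-/

noncomputable def cfP (α : ℝ) : ℕ → ℤ
  | 0 => cfA α 0
  | 1 => cfA α 1 * cfA α 0 + 1
  | n + 2 => cfA α (n + 2) * cfP α (n + 1) + cfP α n

/-- The error `|q_n α - p_n|` of the `n`-th convergent, as a product of fractional parts. -/
noncomputable def cfEta (α : ℝ) : ℕ → ℝ
  | 0 => Int.fract α
  | n + 1 => cfEta α n * Int.fract (cfX α (n + 1))

theorem dni_eq_abs_sub_round (x : ℝ) : dni x = |x - round x| :=
  (abs_sub_round_eq_min x).symm

theorem dni_le_abs_sub (x : ℝ) (c : ℤ) : dni x ≤ |x - c| :=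
  dni_eq_abs_sub_round x ▸ round_le x c

theorem exists_eq_mul_add_mul_of_isUnit_det {q₁ p₁ q₂ p₂ : ℤ} (h : IsUnit (q₁ * p₂ - p₁ * q₂))
    (n c : ℤ) : ∃ x y : ℤ, n = x * q₁ + y * q₂ ∧ c = x * p₁ + y * p₂ := by
  set d := q₁ * p₂ - p₁ * q₂ with hd
  have hdd : d * d = 1 := Int.isUnit_mul_self h
  exact ⟨d * (n * p₂ - c * q₂), d * (c * q₁ - n * p₁),
    by linear_combination -(n * hdd) - d * n * hd, by linear_combination -(c * hdd) - d * c * hd⟩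

theorem eq_zero_of_abs_mul_sub_mul_lt {x y u v : ℤ} {η E : ℝ} (hu : 0 ≤ u) (hv : 0 ≤ v)
    (hη : 0 ≤ η) (hpos : 0 < x * u + y * v) (hlt : x * u + y * v < u + v)
    (h : |x * η - y * E| < E) : y = 0 := by
  have hE : 0 < E := (abs_nonneg _).trans_lt h
  rcases lt_trichotomy y 0 with hy | hy | hy
  · have hx : 0 < x := by by_contra! hx; nlinarith
    have hyE : E ≤ -(y * E) := by
      nlinarith [show (y : ℝ) ≤ -1 by exact_mod_cast Int.le_sub_one_of_lt hy]
    have hxη : 0 ≤ x * η := mul_nonneg (by exact_mod_cast hx.le) hη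
    linarith [le_abs_self (x * η - y * E)]
  · exact hy
  · have hx : x ≤ 0 := by by_contra! hx; nlinarith
    have hyE : E ≤ y * E := by
      nlinarith [show (1 : ℝ) ≤ y by exact_mod_cast hy]
    have hxη : x * η ≤ 0 := mul_nonpos_of_nonpos_of_nonneg (by exact_mod_cast hx) hη
    linarith [neg_le_abs (x * η - y * E)]

section ContinuedFraction

variable {α : ℝ}

theorem irrational_cfX (hα : Irrational α) : ∀ n, Irrational (cfX α n)
  | 0 => hα
  | n + 1 => (Int.self_sub_floor (cfX α n) ▸ (irrational_cfX hα n).sub_intCast _).inv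

theorem fract_cfX_pos (hα : Irrational α) (n : ℕ) : 0 < Int.fract (cfX α n) :=
  (Int.fract_nonneg _).lt_of_ne fun h ↦
    (irrational_cfX hα n).ne_int ⌊cfX α n⌋ (by rw [← Int.self_sub_floor] at h; linarith)

theorem one_le_cfA_succ (hα : Irrational α) (n : ℕ) : 1 ≤ cfA α (n + 1) := by
  have h : 1 < (Int.fract (cfX α n))⁻¹ :=
    one_lt_inv₀ (fract_cfX_pos hα n) |>.mpr (Int.fract_lt_one _)
  exact Int.le_floor.mpr (by exact_mod_cast h.le)

theorem fract_cfX_mul_fract_cfX_succ (hα : Irrational α) (n : ℕ) :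
    Int.fract (cfX α n) * Int.fract (cfX α (n + 1)) = 1 - cfA α (n + 1) * Int.fract (cfX α n) := by
  have hpos := fract_cfX_pos hα n
  rw [← Int.self_sub_floor (cfX α (n + 1)), cfA, cfX]
  field_simp

theorem cfEta_pos (hα : Irrational α) : ∀ n, 0 < cfEta α n
  | 0 => fract_cfX_pos hα 0
  | n + 1 => mul_pos (cfEta_pos hα n) (fract_cfX_pos hα (n + 1))

theorem cfEta_succ_lt (hα : Irrational α) (n : ℕ) : cfEta α (n + 1) < cfEta α n :=
  mul_lt_of_lt_one_right (cfEta_pos hα n) (Int.fract_lt_one _)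

theorem cfEta_add_two (hα : Irrational α) (n : ℕ) :
    cfEta α (n + 2) = cfEta α n - cfA α (n + 2) * cfEta α (n + 1) := by
  simp only [cfEta]
  linear_combination cfEta α n * fract_cfX_mul_fract_cfX_succ hα (n + 1)

theorem cfA_mul_cfEta_lt (hα : Irrational α) (n : ℕ) :
    cfA α (n + 2) * cfEta α (n + 1) < cfEta α n := by
  linarith [cfEta_add_two hα n, cfEta_pos hα (n + 2)]

theorem cfEta_lt_cfA_add_one_mul (hα : Irrational α) (n : ℕ) :
    cfEta α n < (cfA α (n + 2) + 1) * cfEta α (n + 1) := by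
  linarith [cfEta_add_two hα n, cfEta_succ_lt hα (n + 1)]

theorem cfQ_mul_sub_cfP (hα : Irrational α) :
    ∀ n, (cfQ α n : ℝ) * α - cfP α n = (-1) ^ n * cfEta α n
  | 0 => by simp [cfQ, cfP, cfEta, cfA, cfX, Int.self_sub_floor]
  | 1 => by
      have hfract : Int.fract α = α - cfA α 0 := (Int.self_sub_floor α).symm
      have key := fract_cfX_mul_fract_cfX_succ hα 0
      rw [show cfX α 0 = α from rfl] at key
      simp only [cfQ, cfP, cfEta, pow_one]
      push_cast
      linear_combination key - cfA α 1 * hfract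
  | n + 2 => by
      simp only [cfQ, cfP]
      push_cast
      linear_combination cfA α (n + 2) * cfQ_mul_sub_cfP hα (n + 1) + cfQ_mul_sub_cfP hα n
        - (-1) ^ n * cfEta_add_two hα n

theorem one_le_cfQ (hα : Irrational α) : ∀ n, 1 ≤ cfQ α n
  | 0 => le_rfl
  | 1 => one_le_cfA_succ hα 0
  | n + 2 => by
      show 1 ≤ cfA α (n + 2) * cfQ α (n + 1) + cfQ α n
      nlinarith [one_le_cfQ hα n, one_le_cfQ hα (n + 1), one_le_cfA_succ hα (n + 1)]

theorem cfQ_le_cfQ_succ (hα : Irrational α) : ∀ n, cfQ α n ≤ cfQ α (n + 1)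
  | 0 => one_le_cfA_succ hα 0
  | n + 1 => by
      show cfQ α (n + 1) ≤ cfA α (n + 2) * cfQ α (n + 1) + cfQ α n
      nlinarith [one_le_cfQ hα n, one_le_cfQ hα (n + 1), one_le_cfA_succ hα (n + 1)]

theorem cfQ_succ_mul_cfP_sub (α : ℝ) :
    ∀ n, cfQ α (n + 1) * cfP α n - cfP α (n + 1) * cfQ α n = (-1) ^ (n + 1)
  | 0 => by simp only [cfQ, cfP]; ring
  | n + 1 => by
      simp only [cfQ, cfP]
      linear_combination (-1 : ℤ) * cfQ_succ_mul_cfP_sub α n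

theorem semiconvergent_mul_sub (hα : Irrational α) (j : ℕ) (m : ℤ) :
    ((m * cfQ α (j + 1) + cfQ α j : ℤ) : ℝ) * α - ((m * cfP α (j + 1) + cfP α j : ℤ) : ℝ) =
      (-1) ^ j * (cfEta α j - m * cfEta α (j + 1)) := by
  push_cast
  linear_combination m * cfQ_mul_sub_cfP hα (j + 1) + cfQ_mul_sub_cfP hα j

theorem mul_add_mul_semiconvergent_mul_sub (hα : Irrational α) (j : ℕ) (m x y : ℤ) :
    ((x * cfQ α (j + 1) + y * (m * cfQ α (j + 1) + cfQ α j) : ℤ) : ℝ) * α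
        - ((x * cfP α (j + 1) + y * (m * cfP α (j + 1) + cfP α j) : ℤ) : ℝ) =
      (-1) ^ (j + 1) * (x * cfEta α (j + 1) - y * (cfEta α j - m * cfEta α (j + 1))) := by
  push_cast
  linear_combination (x + y * m) * cfQ_mul_sub_cfP hα (j + 1) + y * cfQ_mul_sub_cfP hα j

theorem dni_semiconvergent_le (hα : Irrational α) (j : ℕ) (m : ℤ) :
    dni (((m * cfQ α (j + 1) + cfQ α j : ℤ) : ℝ) * α) ≤ |cfEta α j - m * cfEta α (j + 1)| := by
  simpa only [semiconvergent_mul_sub hα, abs_mul, abs_neg_one_pow, one_mul] using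
    dni_le_abs_sub (((m * cfQ α (j + 1) + cfQ α j : ℤ) : ℝ) * α) (m * cfP α (j + 1) + cfP α j)

theorem isUnit_det_semiconvergent (α : ℝ) (j : ℕ) (m : ℤ) :
    IsUnit (cfQ α (j + 1) * (m * cfP α (j + 1) + cfP α j)
      - cfP α (j + 1) * (m * cfQ α (j + 1) + cfQ α j)) := by
  rw [show cfQ α (j + 1) * (m * cfP α (j + 1) + cfP α j)
      - cfP α (j + 1) * (m * cfQ α (j + 1) + cfQ α j) = (-1) ^ (j + 1) by
    linear_combination cfQ_succ_mul_cfP_sub α j]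
  exact isUnit_neg_one.pow _

end ContinuedFraction

/-- if `0 < n < q_{k,ℓ}` (with `k ≥ 2`, `0 < ℓ ≤ a_k`) and
`‖nα‖ < ‖q_{k,ℓ-1}α‖`, then `n = m·q_{k-1}` for some `1 ≤ m ≤ min{ℓ, a_k − ℓ + 1}`. -/
theorem closest_points (α : ℝ) (hα : Irrational α) (k : ℕ) (hk : 2 ≤ k)
    (ℓ : ℤ) (hℓ : 0 < ℓ) (hℓ' : ℓ ≤ cfA α k)
    (n : ℤ) (hn : 0 < n) (hn' : n < ℓ * cfQ α (k - 1) + cfQ α (k - 2))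
    (h : dni ((n : ℝ) * α) <
        dni ((((ℓ - 1) * cfQ α (k - 1) + cfQ α (k - 2) : ℤ) : ℝ) * α)) :
    ∃ m : ℤ, 1 ≤ m ∧ m ≤ min ℓ (cfA α k - ℓ + 1) ∧ n = m * cfQ α (k - 1) := by
  obtain ⟨j, rfl⟩ : ∃ j, k = j + 2 := ⟨k - 2, by omega⟩
  simp only [show j + 2 - 1 = j + 1 by omega, Nat.add_sub_cancel] at hn' h ⊢
  have hq₀ := one_le_cfQ hα j
  have hq₀₁ := cfQ_le_cfQ_succ hα j
  set η := cfEta α (j + 1)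
  set E := cfEta α j - ((ℓ - 1 : ℤ) : ℝ) * η with hE_def
  have hη : 0 < η := cfEta_pos hα (j + 1)
  have hE : 0 < E := by
    have : ((ℓ - 1 : ℤ) : ℝ) ≤ cfA α (j + 2) := by exact_mod_cast (by omega : ℓ - 1 ≤ cfA α (j + 2))
    nlinarith [cfA_mul_cfEta_lt hα j]
  obtain ⟨x, y, hnxy, hc⟩ := exists_eq_mul_add_mul_of_isUnit_det
    (isUnit_det_semiconvergent α j (ℓ - 1)) n (round ((n : ℝ) * α))
  have hdni : dni (n * α) = |x * η - y * E| := by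
    rw [dni_eq_abs_sub_round, hc, hnxy, mul_add_mul_semiconvergent_mul_sub hα, abs_mul,
      abs_neg_one_pow, one_mul]
  have hlt : |x * η - y * E| < E :=
    hdni ▸ h.trans_le ((dni_semiconvergent_le hα j (ℓ - 1)).trans_eq (abs_of_pos hE))
  obtain rfl : y = 0 :=
    eq_zero_of_abs_mul_sub_mul_lt (by omega) (by nlinarith) hη.le (hnxy ▸ hn) (by linarith) hlt
  simp only [zero_mul, add_zero, Int.cast_zero, sub_zero] at hnxy hlt
  have hx : 0 < x := by nlinarith
  refine ⟨x, hx, le_min (by nlinarith) ?_, hnxy⟩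
  have hxη : x * η < (cfA α (j + 2) - ℓ + 2) * η := by
    push_cast at hE_def
    linarith [le_abs_self (x * η), cfEta_lt_cfA_add_one_mul hα j]
  have : (x : ℝ) < cfA α (j + 2) - ℓ + 2 := lt_of_mul_lt_mul_right hxη hη.le
  have : x < cfA α (j + 2) - ℓ + 2 := by exact_mod_cast this
  omega
end

section
/- Let s_{x,α} be the Sturmian word of irrational slope α ∈ (0, 1/2) and intercept x, obtained as the coding of the orbit of x under rotation by α with intervals I₀ = [0, 1−α) coded by 0 and I₁ = [1−α, 1) coded by 1. Writing s_{x,α} uniquely as a product of minimal squares s_{x,α} = X₁² X₂² X₃² ⋯, the word X₁ X₂ X₃ ⋯ equals s_{ψ(x),α} where ψ(x) = (x + 1 − α)/2 (computed on the circle). In particular, the square root of a Sturmian word of slope α is a Sturmian word of the same slope α. -/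
open Classical in
/-- The Sturmian word of slope `α` and intercept `x`: the `n`-th letter codes
whether the point `{x + nα}` lies in `I₁ = [1−α, 1)` (letter `true` = 1) or in
`I₀ = [0, 1−α)` (letter `false` = 0). -/
noncomputable def sturmian (α x : ℝ) (n : ℕ) : Bool :=
  if 1 - α ≤ Int.fract (x + n * α) then true else false

open Classical in
/-- The Sturmian word of slope `α` and intercept `x` with the other convention:
`I₀ = (0, 1−α]` coded by `false` and `I₁ = (1−α, 1]` (i.e. `(1−α,1) ∪ {0}`) by `true`. -/
noncomputable def sturmian' (α x : ℝ) (n : ℕ) : Bool :=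
  if Int.fract (x + n * α) = 0 ∨ 1 - α < Int.fract (x + n * α) then true else false

/-- `w` is a prefix of the infinite word `s`. -/
def IsPref (w : List Bool) (s : ℕ → Bool) : Prop :=
  ∀ i, i < w.length → w.getD i false = s i

/-- `w` belongs to the language `L(α)` of factors of Sturmian words of slope `α`. -/
def inLang (α : ℝ) (w : List Bool) : Prop :=
  ∃ x ∈ Set.Ico (0 : ℝ) 1, ∃ k : ℕ, ∀ i < w.length, w.getD i false = sturmian α x (k + i)

/-- The map `ψ(x) = (x + 1 − α)/2` on the circle `[0,1)`, with `ψ(0) = (1−α)/2`. -/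
noncomputable def psi (α x : ℝ) : ℝ := if x = 0 then (1 - α) / 2 else (x + 1 - α) / 2

/-!
If `s_{y,α}` begins with a square `X²` with `|X| = q`, the square contains an even number `2S` of
ones, so `⌊y + 2qα⌋ = 2S` and `ψ(y) + qα ≡ ψ({y + 2qα})`: the intercept of the square root moves
in step with the square factorization. It remains to see that `s_{ψ(y),α}` begins with `X` when
the square is minimal. The first `q` letters of `s_{z,α}` do not change as long as `z` crosses no
point `-jα mod 1` with `j ≤ q`. Minimality forbids such a point between `y` and `1 - α`, apart from
`1 - α` itself, and `ψ(y)` is the midpoint of `y` and `1 - α`.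
-/

open Set Interval

theorem Int.fract_fract_add {R : Type*} [Ring R] [LinearOrder R] [IsStrictOrderedRing R]
    [FloorRing R] (a b : R) : Int.fract (Int.fract a + b) = Int.fract (a + b) :=
  Int.fract_eq_fract.2 ⟨-⌊a⌋, by rw [Int.fract, Int.cast_neg]; abel⟩

theorem List.flatten_map_range_succ {β : Type*} (f : ℕ → List β) (n : ℕ) :
    ((List.range (n + 1)).map f).flatten =
      f 0 ++ ((List.range n).map fun i => f (i + 1)).flatten := by
  simp [List.range_succ_eq_map, Function.comp_def]

def BeginsWithSquare (s : ℕ → Bool) (q : ℕ) : Prop :=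
  ∀ n < q, s n = s (n + q)

section Words

variable {u v w : List Bool} {s : ℕ → Bool}

theorem isPref_append :
    IsPref (u ++ v) s ↔ IsPref u s ∧ IsPref v (fun i => s (u.length + i)) := by
  refine ⟨fun h => ⟨fun i hi => ?_, fun i hi => ?_⟩, fun ⟨hu, hv⟩ i hi => ?_⟩
  · rw [← h i (by simp; omega), List.getD_append _ _ _ _ hi]
  · show _ = s (u.length + i)
    rw [← h (u.length + i) (by simp; omega), List.getD_append_right _ _ _ _ (by omega),
      Nat.add_sub_cancel_left]
  · rcases lt_or_ge i u.length with hiu | hiu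
    · rw [List.getD_append _ _ _ _ hiu, hu i hiu]
    · obtain ⟨k, rfl⟩ := Nat.exists_eq_add_of_le hiu
      rw [List.getD_append_right _ _ _ _ hiu, Nat.add_sub_cancel_left,
        hv k (by simp at hi; omega)]

theorem IsPref.take (h : IsPref w s) (p : ℕ) : IsPref (w.take p) s := fun i hi => by
  rw [List.length_take] at hi
  rw [List.getD_eq_getElem _ _ (by simp; omega), List.getElem_take,
    ← List.getD_eq_getElem _ false (by omega), h i (by omega)]

theorem IsPref.prefix_of_length_le (hu : IsPref u s) (hw : IsPref w s)
    (h : u.length ≤ w.length) : u <+: w := by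
  rw [List.prefix_iff_eq_take]
  refine List.ext_getElem (by simp; omega) fun i hi hi' => ?_
  rw [← List.getD_eq_getElem _ false, ← List.getD_eq_getElem _ false, hu i hi,
    (hw.take u.length) i hi']

theorem IsPref.beginsWithSquare (h : IsPref (v ++ v) s) : BeginsWithSquare s v.length :=
  fun n hn => by
    obtain ⟨h₁, h₂⟩ := isPref_append.1 h
    rw [← h₁ n hn, h₂ n hn, Nat.add_comm]

theorem IsPref.not_beginsWithSquare (h : IsPref (v ++ v) s)
    (hmin : ∀ u : List Bool, u ≠ [] → u ++ u <+: v ++ v → u = v) {p : ℕ} (hp : 0 < p)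
    (hpv : p < v.length) : ¬ BeginsWithSquare s p := by
  intro hsq
  set u := v.take p
  have hu : u.length = p := by simp [u]; omega
  have huu : IsPref (u ++ u) s := by
    have hv : IsPref v s := (isPref_append.1 h).1
    refine isPref_append.2 ⟨hv.take p, fun i hi => ?_⟩
    show _ = s (u.length + i)
    rw [hv.take p i hi, hu, Nat.add_comm, hsq i (hu ▸ hi)]
  have hne : u ≠ [] := by rw [← List.length_pos_iff, hu]; exact hp
  have := congrArg List.length (hmin u hne (huu.prefix_of_length_le h (by simp; omega)))
  omega

end Words

namespace Sturmian

variable {α y z z' : ℝ}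

theorem psi_eq (α x : ℝ) : psi α x = (x + 1 - α) / 2 := by
  unfold psi; split_ifs with h <;> simp [h]

theorem sturmian_eq_decide (α z : ℝ) (n : ℕ) :
    sturmian α z n = decide (1 - α ≤ Int.fract (z + n * α)) := by
  unfold sturmian; split_ifs with h <;> simp [h]

theorem sturmian_shift (α z : ℝ) (k m : ℕ) :
    sturmian α z (k + m) = sturmian α (Int.fract (z + k * α)) m := by
  rw [sturmian_eq_decide, sturmian_eq_decide, Int.fract_fract_add]
  congr 3
  push_cast; ring

theorem floor_add_mul_eq_sum_sturmian (h0 : 0 ≤ α) (h1 : α < 1) (hy : y ∈ Ico (0 : ℝ) 1)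
    (N : ℕ) : ⌊y + N * α⌋ = ∑ n ∈ Finset.range N, ((sturmian α y n).toNat : ℤ) := by
  induction N with
  | zero => simpa using Int.floor_eq_zero_iff.2 hy
  | succ N ih =>
    have hsplit : y + (N + 1 : ℕ) * α = (Int.fract (y + N * α) + α) + ⌊y + N * α⌋ := by
      rw [Int.fract]; push_cast; ring
    rw [Finset.sum_range_succ, ← ih, hsplit, Int.floor_add_intCast, add_comm,
      sturmian_eq_decide]
    congr 1
    have := Int.fract_nonneg (y + N * α)
    have := Int.fract_lt_one (y + N * α)
    by_cases hc : 1 - α ≤ Int.fract (y + N * α)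
    · simp only [hc, decide_true, Bool.toNat_true, Nat.cast_one, Int.floor_eq_iff]
      constructor <;> push_cast <;> linarith
    · simp only [hc, decide_false, Bool.toNat_false, Nat.cast_zero, Int.floor_eq_zero_iff]
      constructor <;> linarith

theorem fract_psi_add_mul (h0 : 0 < α) (h1 : α < 1) (hy : y ∈ Ico (0 : ℝ) 1) {q : ℕ}
    (hsq : BeginsWithSquare (sturmian α y) q) :
    Int.fract (psi α y + q * α) = psi α (Int.fract (y + (q + q : ℕ) * α)) := by
  set S := ∑ n ∈ Finset.range q, ((sturmian α y n).toNat : ℤ)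
  have heven : ⌊y + (q + q : ℕ) * α⌋ = 2 * S := by
    rw [floor_add_mul_eq_sum_sturmian h0.le h1 hy, Finset.sum_range_add, two_mul]
    congr 1
    exact Finset.sum_congr rfl fun n hn => by
      rw [add_comm q n, ← hsq n (Finset.mem_range.1 hn)]
  have hT := Int.fract_nonneg (y + (q + q : ℕ) * α)
  have hT' := Int.fract_lt_one (y + (q + q : ℕ) * α)
  rw [psi_eq, psi_eq, Int.fract_eq_iff]
  refine ⟨by linarith, by linarith, S, ?_⟩
  rw [Int.fract, heven]
  push_cast; ring

/-- As `z` moves along `[0,1)`, the letter `sturmian α z n` can only change when `z` passes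
`cut α n` or `cut α (n + 1)`, the points sent to `0` and to `1 - α` by the `n`-th rotation. -/
noncomputable def cut (α : ℝ) (j : ℕ) : ℝ := Int.fract (-(j * α))

theorem cut_zero (α : ℝ) : cut α 0 = 0 := by simp [cut]

theorem cut_one (h0 : 0 < α) (h1 : α < 1) : cut α 1 = 1 - α := by
  rw [cut, Int.fract_eq_iff]
  exact ⟨by linarith, by linarith, -1, by push_cast; ring⟩

theorem sturmian_eq_of_cut_notMem_Ioc (hz : 0 ≤ z) (hzz' : z ≤ z') (hz' : z' < 1) {n : ℕ}
    (hn : cut α n ∉ Ioc z z') (hn₁ : cut α (n + 1) ∉ Ioc z z') :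
    sturmian α z n = sturmian α z' n := by
  set w := Int.fract (z + n * α)
  have hw0 : 0 ≤ w := Int.fract_nonneg _
  have hw1 : w < 1 := Int.fract_lt_one _
  have hcut (k : ℕ) (h : z - w - k * α + 1 ∈ Ico (0 : ℝ) 1) :
      cut α (n + k) = z - w - k * α + 1 :=
    Int.fract_eq_iff.2 ⟨h.1, h.2, -⌊z + n * α⌋ - 1, by
      rw [show w = z + n * α - ⌊z + n * α⌋ from rfl]; push_cast; ring⟩
  have hlt : w + (z' - z) < 1 := by
    by_contra! hge
    have := hcut 0 ⟨by simp; linarith, by simp; linarith⟩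
    exact hn ⟨by simp at this; linarith, by simp at this; linarith⟩
  have hw' : Int.fract (z' + n * α) = w + (z' - z) := by
    rw [Int.fract_eq_iff]
    exact ⟨by linarith, hlt, ⌊z + n * α⌋, by
      rw [show w = z + n * α - ⌊z + n * α⌋ from rfl]; ring⟩
  rw [sturmian_eq_decide, sturmian_eq_decide, hw', decide_eq_decide]
  refine ⟨fun h => by linarith, fun h => by_contra fun h' => hn₁ ?_⟩
  have := hcut 1 ⟨by simp; linarith, by simp; linarith⟩
  simp only [Nat.cast_one, one_mul] at this
  rw [this]
  constructor <;> linarith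

theorem sturmian_eq_of_cut_notMem_uIoc (hz : z ∈ Ico (0 : ℝ) 1) (hz' : z' ∈ Ico (0 : ℝ) 1)
    {N : ℕ} (h : ∀ j ≤ N, cut α j ∉ Ι z z') : ∀ n < N, sturmian α z n = sturmian α z' n := by
  wlog hzz' : z ≤ z' generalizing z z'
  · exact fun n hn => (this hz' hz (by rwa [uIoc_comm]) (le_of_not_ge hzz') n hn).symm
  rw [uIoc_of_le hzz'] at h
  exact fun n hn => sturmian_eq_of_cut_notMem_Ioc hz.1 hzz' hz'.2 (h n hn.le) (h (n + 1) hn)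

theorem uIoc_subset_uIoc_diff_singleton {y b w : ℝ}
    (hw : (y ≤ w ∧ w < b) ∨ (b ≤ w ∧ w ≤ y)) : Ι y w ⊆ Ι y b \ {b} := by
  rcases hw with ⟨h₁, h₂⟩ | ⟨h₁, h₂⟩
  · rw [uIoc_of_le h₁, uIoc_of_le (by linarith)]
    exact fun t ht => ⟨⟨ht.1, by linarith [ht.2]⟩, fun (h : t = b) => by linarith [ht.2]⟩
  · rw [uIoc_of_ge h₂, uIoc_of_ge (by linarith)]
    exact fun t ht => ⟨⟨by linarith [ht.1], ht.2⟩, fun (h : t = b) => by linarith [ht.1]⟩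

/-- A cut point between the intercept `y` and `1 - α` (other than `cut α 1 = 1 - α`)
would make `s_{y,α}` begin with a shorter square: reflecting it in the midpoint of `y` and
`1 - α` gives the intercept of the shifted word, which no earlier cut separates from `y`. -/
theorem cut_notMem_of_forall_not_beginsWithSquare (h0 : 0 < α) (h1 : α < 1)
    (hy : y ∈ Ico (0 : ℝ) 1) {q : ℕ}
    (hmin : ∀ p, 0 < p → p < q → ¬ BeginsWithSquare (sturmian α y) p) :
    ∀ j ≤ q, cut α j ∉ Ι y (1 - α) \ {1 - α} := by
  intro j
  induction j using Nat.strong_induction_on with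
  | _ j ih =>
  intro hjq ⟨hc, hc1⟩
  obtain _ | _ | p := j
  · rw [cut_zero] at hc
    exact absurd hc.1 (not_lt.2 (le_min hy.1 (by linarith)))
  · exact hc1 (cut_one h0 h1)
  · set c := cut α (p + 2)
    set w := y + (1 - α) - c
    have hwb : (y ≤ w ∧ w < 1 - α) ∨ (1 - α ≤ w ∧ w ≤ y) := by
      rcases lt_or_ge y (1 - α) with hy₁ | hy₁
      · rw [uIoc_of_le hy₁.le] at hc
        exact Or.inl ⟨by linarith [hc.2], by linarith [hc.1]⟩
      · rw [uIoc_of_ge hy₁] at hc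
        exact Or.inr ⟨by linarith [hc.2], by linarith [hc.1]⟩
    have hw : w ∈ Ico (0 : ℝ) 1 := by
      rcases hwb with ⟨h₁, h₂⟩ | ⟨h₁, h₂⟩ <;> constructor <;> linarith [hy.1, hy.2]
    have hshift : Int.fract (y + (p + 1 : ℕ) * α) = w :=
      Int.fract_eq_iff.2 ⟨hw.1, hw.2, -1 - ⌊-((p + 2 : ℕ) * α)⌋, by
        simp only [w, c, cut, Int.fract]; push_cast; ring⟩
    have hagree := sturmian_eq_of_cut_notMem_uIoc (α := α) hy hw (N := p + 1)
      fun m hm hmem => ih m (by omega) (by omega) (uIoc_subset_uIoc_diff_singleton hwb hmem)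
    refine hmin (p + 1) p.succ_pos (by omega) fun n hn => ?_
    rw [hagree n hn, add_comm n, sturmian_shift, hshift]

theorem sturmian_psi_eq (h0 : 0 < α) (h1 : α < 1) (hy : y ∈ Ico (0 : ℝ) 1) {q : ℕ}
    (hmin : ∀ p, 0 < p → p < q → ¬ BeginsWithSquare (sturmian α y) p) :
    ∀ i < q, sturmian α (psi α y) i = sturmian α y i := by
  have hmid : (y ≤ psi α y ∧ psi α y < 1 - α) ∨ (1 - α ≤ psi α y ∧ psi α y ≤ y) := by
    rw [psi_eq]
    rcases lt_or_ge y (1 - α) with hy₁ | hy₁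
    · exact Or.inl ⟨by linarith, by linarith⟩
    · exact Or.inr ⟨by linarith, by linarith⟩
  have hψ : psi α y ∈ Ico (0 : ℝ) 1 := by
    rw [psi_eq]; constructor <;> linarith [hy.1, hy.2]
  intro i hi
  refine (sturmian_eq_of_cut_notMem_uIoc hy hψ (fun m hm hmem => ?_) i hi).symm
  exact cut_notMem_of_forall_not_beginsWithSquare h0 h1 hy hmin m hm
    (uIoc_subset_uIoc_diff_singleton hmid hmem)

end Sturmian

open Sturmian

theorem sqrt_sturmian_general (α x : ℝ) (h0 : 0 < α) (h2 : α < 1 / 2)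
    (hx : x ∈ Set.Ico (0 : ℝ) 1) (X : ℕ → List Bool)
    (hmin : ∀ n, ∀ v : List Bool, v ≠ [] → (v ++ v) <+: (X n ++ X n) → v = X n)
    (hfact : ∀ n, IsPref (List.flatten ((List.range n).map fun i => X i ++ X i))
      (sturmian α x)) :
    ∀ n, IsPref (List.flatten ((List.range n).map X)) (sturmian α (psi α x)) := by
  have h1 : α < 1 := by linarith
  intro n
  induction n generalizing x X with
  | zero => simp [IsPref]
  | succ n ih =>
    have hsq : IsPref (X 0 ++ X 0) (sturmian α x) := by simpa using hfact 1
    have hsq' : IsPref (X 0) (sturmian α x) := (isPref_append.1 hsq).1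
    set x' := Int.fract (x + (X 0 ++ X 0).length * α)
    have hψ : (fun i => sturmian α (psi α x) ((X 0).length + i)) = sturmian α (psi α x') := by
      funext i
      rw [sturmian_shift, fract_psi_add_mul h0 h1 hx hsq.beginsWithSquare, ← List.length_append]
    rw [List.flatten_map_range_succ, isPref_append, hψ]
    refine ⟨fun i hi => ?_, ih x' ⟨Int.fract_nonneg _, Int.fract_lt_one _⟩ _
      (fun i => hmin (i + 1)) fun m => ?_⟩
    · rw [sturmian_psi_eq h0 h1 hx (fun p hp hpq => hsq.not_beginsWithSquare (hmin 0) hp hpq)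
        i hi, hsq' i hi]
    · have := (isPref_append.1 (List.flatten_map_range_succ _ m ▸ hfact (m + 1))).2
      simpa only [sturmian_shift] using this

/-- if the Sturmian word `s_{x,α}` (slope `α ∈ (0,1/2)` irrational,
intercept `x ∈ [0,1)`) is written as the product of minimal squares
`X₁²X₂²X₃²⋯`, then the square root `X₁X₂X₃⋯` is the Sturmian word `s_{ψ(x),α}`
of the same slope `α` and intercept `ψ(x) = (x + 1 − α)/2`. -/
theorem sqrt_sturmian (α x : ℝ) (hα : Irrational α) (h0 : 0 < α) (h2 : α < 1 / 2)
    (hx : x ∈ Set.Ico (0 : ℝ) 1) (X : ℕ → List Bool)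
    (hne : ∀ n, X n ≠ [])
    (hmin : ∀ n, ∀ v : List Bool, v ≠ [] → (v ++ v) <+: (X n ++ X n) → v = X n)
    (hfact : ∀ n, IsPref (List.flatten ((List.range n).map fun i => X i ++ X i))
      (sturmian α x)) :
    ∀ n, IsPref (List.flatten ((List.range n).map X)) (sturmian α (psi α x)) :=
  sqrt_sturmian_general α x h0 h2 hx X hmin hfact
end

section
/- Let α = [0; a₁, a₂, …] with a₁ ≥ 2. Every Sturmian word of slope α, when written as a product of the six minimal squares of slope α, has each minimal square root among: S₁ = 0, S₂ = 01·0^{a−1}, S₃ = 01·0^a, S₄ = 1·0^a, S₅ = 10^{a+1}(10^a)^b, S₆ = 10^{a+1}(10^a)^{b+1}, where a = a₁ − 1 and b = a₂ − 1. In particular exactly six distinct minimal squares occur in L(α). -/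
/-- `S₁ = 0`. -/
def W1 : List Bool := [false]

/-- `S₂ = 010^{a−1}`. -/
def W2 (a : ℕ) : List Bool := false :: true :: List.replicate (a - 1) false

/-- `S₃ = 010^a`. -/
def W3 (a : ℕ) : List Bool := false :: true :: List.replicate a false

/-- `S₄ = 10^a`. -/
def W4 (a : ℕ) : List Bool := true :: List.replicate a false

/-- `S₅ = 10^{a+1}(10^a)^b`. -/
def W5 (a b : ℕ) : List Bool :=
  (true :: List.replicate (a + 1) false) ++ List.flatten (List.replicate b (W4 a))

/-- `S₆ = 10^{a+1}(10^a)^{b+1}`. -/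
def W6 (a b : ℕ) : List Bool :=
  (true :: List.replicate (a + 1) false) ++ List.flatten (List.replicate (b + 1) (W4 a))

/-!
Write `δ = delta α a = 1 - (a + 1)α`. A Sturmian word of slope `α` codes the orbit of the
rotation by `α`, and the bounds `(a + 1)α < 1 < (a + 2)α` and `(b + 1)δ < α < (b + 2)δ` coming
from the first two partial quotients show that it is a concatenation of blocks `10^a` and
`10^(a+1)`, the orbit point dropping by `δ` along each block `10^a`, so that between two blocks
`10^(a+1)` there are `b` or `b + 1` blocks `10^a`. Hence the first few letters at any position
exhibit one of the six squares `SᵢSᵢ` there, and the same letters force every square occurring at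
that position to have a root at least as long as `Sᵢ`. So every square begins with one of the six
squares, and none of these six has a shorter square prefix. Each of them occurs for a suitable
intercept, found by following the orbit.
-/

namespace Sturmian

def OccursAt (s : ℕ → Bool) (k : ℕ) (w : List Bool) : Prop :=
  ∀ i < w.length, w.getD i false = s (k + i)

section OccursAt

variable {s : ℕ → Bool} {k : ℕ} {u v w : List Bool}

@[simp] lemma occursAt_nil : OccursAt s k [] := fun i hi => absurd hi (Nat.not_lt_zero i)

lemma occursAt_cons {c : Bool} : OccursAt s k (c :: w) ↔ s k = c ∧ OccursAt s (k + 1) w := by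
  constructor
  · intro h
    refine ⟨(h 0 (by simp)).symm, fun i hi => ?_⟩
    simpa [Nat.add_right_comm, Nat.add_assoc] using h (i + 1) (by simpa using hi)
  · rintro ⟨hc, hw⟩ (_ | i) hi
    · simpa using hc.symm
    · simpa [Nat.add_right_comm, Nat.add_assoc] using hw i (by simpa using hi)

lemma occursAt_append : OccursAt s k (u ++ v) ↔ OccursAt s k u ∧ OccursAt s (k + u.length) v := by
  induction u generalizing k with
  | nil => simp
  | cons c u ih =>
    simp only [List.cons_append, occursAt_cons, ih, List.length_cons, and_assoc]
    rw [Nat.add_right_comm, Nat.add_assoc]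

lemma occursAt_replicate {n : ℕ} {c : Bool} :
    OccursAt s k (List.replicate n c) ↔ ∀ i < n, s (k + i) = c := by
  induction n generalizing k with
  | zero => simp
  | succ n ih =>
    rw [List.replicate_succ, occursAt_cons, ih, Nat.forall_lt_succ_left]
    simp only [Nat.add_zero, Nat.add_right_comm, Nat.add_assoc]

lemma occursAt_flatten_replicate {j : ℕ} :
    OccursAt s k (List.replicate j w).flatten ↔ ∀ i < j, OccursAt s (k + i * w.length) w := by
  induction j generalizing k with
  | zero => simp
  | succ j ih =>
    rw [List.replicate_succ, List.flatten_cons, occursAt_append, ih, Nat.forall_lt_succ_left]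
    simp only [Nat.zero_mul, Nat.add_zero, Nat.succ_mul, Nat.add_assoc, Nat.add_comm w.length]

lemma OccursAt.of_prefix (hw : OccursAt s k w) (hvw : v <+: w) : OccursAt s k v := by
  obtain ⟨t, rfl⟩ := hvw
  exact (occursAt_append.1 hw).1

lemma OccursAt.prefix_of_length_le (hv : OccursAt s k v) (hw : OccursAt s k w)
    (hl : v.length ≤ w.length) : v <+: w := by
  rw [List.prefix_iff_eq_take]
  refine List.ext_getElem (by simp [hl]) fun i hi _ => ?_
  have hv' := hv i hi
  have hw' := hw i (by omega)
  rw [List.getD_eq_getElem _ _ hi] at hv'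
  rw [List.getD_eq_getElem _ _ (by omega)] at hw'
  simp [hv', hw']

lemma OccursAt.periodic (h : OccursAt s k (u ++ u)) :
    ∀ i < u.length, s (k + u.length + i) = s (k + i) := by
  obtain ⟨h₁, h₂⟩ := occursAt_append.1 h
  intro i hi
  rw [← h₁ i hi, h₂ i hi]

lemma IsPref.occursAt_right (h : IsPref (u ++ v) s) : OccursAt s u.length v := by
  have h₀ : OccursAt s 0 (u ++ v) := fun i hi => by rw [Nat.zero_add]; exact h i hi
  simpa using (occursAt_append.1 h₀).2

lemma occursAt_W1_sq_iff : OccursAt s k (W1 ++ W1) ↔ s k = false ∧ s (k + 1) = false := by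
  simp [W1, occursAt_cons]

end OccursAt

def block (g : ℕ) : List Bool := true :: List.replicate g false

def longRun (a j : ℕ) : List Bool := block (a + 1) ++ (List.replicate j (block a)).flatten

@[simp] lemma length_block (g : ℕ) : (block g).length = g + 1 := by simp [block]

lemma length_longRun (a j : ℕ) : (longRun a j).length = a + 2 + j * (a + 1) := by
  simp [longRun, List.sum_replicate]

lemma W5_eq_longRun (a b : ℕ) : W5 a b = longRun a b := rfl

lemma W6_eq_longRun (a b : ℕ) : W6 a b = longRun a (b + 1) := rfl

def sixRoots (a b : ℕ) : Set (List Bool) := {W1, W2 a, W3 a, W4 a, W5 a b, W6 a b}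

section SixRoots

variable {a b : ℕ}

lemma ne_nil_of_mem_sixRoots {v : List Bool} (hv : v ∈ sixRoots a b) : v ≠ [] := by
  rcases hv with rfl | rfl | rfl | rfl | rfl | rfl <;> simp [W1, W2, W3, W4, W5, W6]

lemma sixSquares_eq_image :
    ({W1 ++ W1, W2 a ++ W2 a, W3 a ++ W3 a, W4 a ++ W4 a, W5 a b ++ W5 a b, W6 a b ++ W6 a b} :
      Set (List Bool)) = (fun v => v ++ v) '' sixRoots a b := by
  simp [sixRoots, Set.image_insert_eq]

lemma nodup_sixSquares (ha : 1 ≤ a) :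
    List.Nodup [W1 ++ W1, W2 a ++ W2 a, W3 a ++ W3 a, W4 a ++ W4 a,
      W5 a b ++ W5 a b, W6 a b ++ W6 a b] := by
  refine List.Nodup.of_map (fun w => (w.length, w.head?)) ?_
  simp [W1, W2, W3, W4, W5, W6, List.sum_replicate, Nat.succ_mul]
  omega

end SixRoots

noncomputable def delta (α : ℝ) (a : ℕ) : ℝ := 1 - (a + 1) * α

/-- `α = [0; a + 1, b + 1, …]`, i.e. `⌊1 / α⌋ = a + 1` and `⌊α / delta α a⌋ = b + 1`, with strict
inequalities since `α` is irrational. -/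
structure QuotientBounds (α : ℝ) (a b : ℕ) : Prop where
  pos : 0 < α
  one_le : 1 ≤ a
  mul_lt_one : (a + 1) * α < 1
  one_lt_mul : 1 < (a + 2) * α
  mul_delta_lt : (b + 1) * delta α a < α
  lt_mul_delta : α < (b + 2) * delta α a

namespace QuotientBounds

variable {α : ℝ} {a b : ℕ}

lemma delta_pos (hQ : QuotientBounds α a b) : 0 < delta α a := by
  unfold delta; linarith [hQ.mul_lt_one]

lemma delta_lt (hQ : QuotientBounds α a b) : delta α a < α := by
  unfold delta; linarith [hQ.one_lt_mul]

lemma two_mul_lt_one (hQ : QuotientBounds α a b) : 2 * α < 1 := by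
  have : (2 : ℝ) ≤ a + 1 := by exact_mod_cast Nat.succ_le_succ hQ.one_le
  nlinarith [hQ.mul_lt_one, hQ.pos]

lemma lt_one (hQ : QuotientBounds α a b) : α < 1 := by
  linarith [hQ.two_mul_lt_one, hQ.pos]

end QuotientBounds

lemma irrational_cfX {α : ℝ} (hα : Irrational α) : ∀ n, Irrational (cfX α n)
  | 0 => hα
  | n + 1 => ((irrational_cfX hα n).sub_intCast ⌊cfX α n⌋).inv

lemma _root_.Irrational.lt_of_floor_eq {x : ℝ} (hx : Irrational x) {m : ℤ} (h : ⌊x⌋ = m) :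
    (m : ℝ) < x ∧ x < m + 1 :=
  ⟨(h ▸ Int.floor_le x).lt_of_ne (hx.ne_int m).symm, h ▸ Int.lt_floor_add_one x⟩

lemma quotientBounds_of_cfA {α : ℝ} {a b : ℕ} (hα : Irrational α) (h0 : 0 < α) (h2 : α < 1 / 2)
    (ha : (a : ℤ) = cfA α 1 - 1) (hb : (b : ℤ) = cfA α 2 - 1) : QuotientBounds α a b := by
  have hX₁ : cfX α 1 = α⁻¹ := by
    simp [cfX, Int.fract_eq_self.2 ⟨h0.le, by linarith⟩]
  have hfloor₁ : ⌊cfX α 1⌋ = (a + 1 : ℕ) := by rw [← cfA]; push_cast; omega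
  obtain ⟨hA₁, hA₂⟩ := Irrational.lt_of_floor_eq (irrational_cfX hα 1) hfloor₁
  rw [hX₁, ← one_div] at hA₁ hA₂
  push_cast at hA₁ hA₂
  have mul_lt_one : (a + 1) * α < 1 := (lt_div_iff₀ h0).1 hA₁
  have one_lt_mul : 1 < (a + 2) * α := by
    have := (div_lt_iff₀ h0).1 hA₂; linarith
  have hδ : 0 < delta α a := by unfold delta; linarith
  have hfract : Int.fract (cfX α 1) = α⁻¹ - (a + 1) := by
    rw [← Int.self_sub_floor, hfloor₁, hX₁]; push_cast; ring
  have hX₂ : cfX α 2 = α / delta α a := by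
    rw [cfX, hfract, delta]
    field_simp
  have hfloor₂ : ⌊cfX α 2⌋ = (b + 1 : ℕ) := by rw [← cfA]; push_cast; omega
  obtain ⟨hB₁, hB₂⟩ := Irrational.lt_of_floor_eq (irrational_cfX hα 2) hfloor₂
  rw [hX₂] at hB₁ hB₂
  push_cast at hB₁ hB₂
  refine ⟨h0, ?_, mul_lt_one, one_lt_mul, (lt_div_iff₀ hδ).1 hB₁, ?_⟩
  · by_contra h
    obtain rfl : a = 0 := by omega
    norm_num at one_lt_mul
    linarith
  · have := (div_lt_iff₀ hδ).1 hB₂; linarith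

/-- `s` codes the orbit `f` of a rotation by `α`: the letter `1` is read at points `≥ 1 - α`, the
letter `0` at points `≤ 1 - α`; the boundary point may carry either letter, so that both
`sturmian` and `sturmian'` are covered. -/
structure RotationCoding (α : ℝ) (s : ℕ → Bool) (f : ℕ → ℝ) : Prop where
  le_one : ∀ n, f n ≤ 1
  le_of_true : ∀ n, s n = true → 1 - α ≤ f n
  le_of_false : ∀ n, s n = false → f n ≤ 1 - α
  succ : ∀ n, f (n + 1) = f n + α - if s n then 1 else 0

namespace RotationCoding

variable {α : ℝ} {a b : ℕ} {s : ℕ → Bool} {f : ℕ → ℝ} {k n P : ℕ} {u v : List Bool}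

lemma succ_of_true (hE : RotationCoding α s f) (hn : s n = true) : f (n + 1) = f n + α - 1 := by
  simp [hE.succ n, hn]

lemma succ_of_false (hE : RotationCoding α s f) (hn : s n = false) : f (n + 1) = f n + α := by
  simp [hE.succ n, hn]

lemma eq_false_of_lt (hE : RotationCoding α s f) (h : f n < 1 - α) : s n = false :=
  Bool.eq_false_iff.2 fun hn => (hE.le_of_true n hn).not_gt h

lemma eq_true_of_lt (hE : RotationCoding α s f) (h : 1 - α < f n) : s n = true := by
  by_contra hn
  exact (hE.le_of_false n (by simpa using hn)).not_gt h

lemma orbit_after_one (hE : RotationCoding α s f) (hQ : QuotientBounds α a b) (hn : s n = true)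
    {t : ℕ} (ht : t ≤ a) : f (n + 1 + t) = f n + (t + 1) * α - 1 := by
  induction t with
  | zero => simp [hE.succ_of_true hn]
  | succ t ih =>
    have hft := ih (by omega)
    have hlt : f (n + 1 + t) < 1 - α := by
      have : ((t : ℝ) + 2) * α ≤ (a + 1) * α :=
        mul_le_mul_of_nonneg_right (by exact_mod_cast (by omega : t + 2 ≤ a + 1)) hQ.pos.le
      linarith [hE.le_one n, hQ.mul_lt_one]
    rw [← Nat.add_assoc, hE.succ_of_false (hE.eq_false_of_lt hlt), hft]
    push_cast; ring

lemma false_after_one (hE : RotationCoding α s f) (hQ : QuotientBounds α a b) (hn : s n = true)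
    {t : ℕ} (ht : t < a) : s (n + 1 + t) = false := by
  refine hE.eq_false_of_lt ?_
  have : ((t : ℝ) + 2) * α ≤ (a + 1) * α :=
    mul_le_mul_of_nonneg_right (by exact_mod_cast (by omega : t + 2 ≤ a + 1)) hQ.pos.le
  rw [hE.orbit_after_one hQ hn ht.le]
  linarith [hE.le_one n, hQ.mul_lt_one]

lemma orbit_block (hE : RotationCoding α s f) (hQ : QuotientBounds α a b) (hn : s n = true) :
    f (n + (a + 1)) = f n - delta α a := by
  rw [← Nat.add_assoc, Nat.add_right_comm, hE.orbit_after_one hQ hn le_rfl, delta]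
  ring

lemma le_of_short_gap (hE : RotationCoding α s f) (hQ : QuotientBounds α a b) (hn : s n = true)
    (h : s (n + (a + 1)) = true) : 1 - α + delta α a ≤ f n := by
  linarith [hE.le_of_true _ h, hE.orbit_block hQ hn]

lemma long_gap (hE : RotationCoding α s f) (hQ : QuotientBounds α a b) (hn : s n = true)
    (h : s (n + (a + 1)) = false) :
    f n ≤ 1 - α + delta α a ∧ s (n + (a + 2)) = true ∧ f (n + (a + 2)) = f n + α - delta α a := by
  have hblock := hE.orbit_block hQ hn
  have hnext : f (n + (a + 2)) = f n + α - delta α a := by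
    rw [show n + (a + 2) = n + (a + 1) + 1 by omega, hE.succ_of_false h, hblock]; ring
  refine ⟨by linarith [hE.le_of_false _ h], hE.eq_true_of_lt ?_, hnext⟩
  linarith [hE.le_of_true n hn, hQ.delta_lt]

lemma run_of_short_gaps (hE : RotationCoding α s f) (hQ : QuotientBounds α a b)
    (hn : s n = true) (h : s (n + (a + 1)) = false) {i : ℕ}
    (hgaps : ∀ i' < i, s (n + (a + 2) + i' * (a + 1) + (a + 1)) = true) :
    s (n + (a + 2) + i * (a + 1)) = true ∧
      f (n + (a + 2) + i * (a + 1)) = f n + α - (i + 1) * delta α a := by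
  induction i with
  | zero =>
    obtain ⟨-, h₁, hf₁⟩ := hE.long_gap hQ hn h
    simpa using ⟨h₁, hf₁⟩
  | succ i ih =>
    obtain ⟨hi, hfi⟩ := ih fun i' hi' => hgaps i' (by omega)
    rw [show n + (a + 2) + (i + 1) * (a + 1) = n + (a + 2) + i * (a + 1) + (a + 1) by ring]
    refine ⟨hgaps i (by omega), ?_⟩
    rw [hE.orbit_block hQ hi, hfi]
    push_cast; ring

/-- The blocks following a block `10^(a+1)` at `n` start at `n + (a + 2) + i * (a + 1)`: they are
`j ∈ {b, b + 1}` blocks `10^a`, followed by a block `10^(a+1)`. -/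
lemma run_after_long_gap (hE : RotationCoding α s f) (hQ : QuotientBounds α a b)
    (hn : s n = true) (h : s (n + (a + 1)) = false) :
    ∃ j, (j = b ∨ j = b + 1) ∧
      (∀ i ≤ j, s (n + (a + 2) + i * (a + 1)) = true ∧
        f (n + (a + 2) + i * (a + 1)) = f n + α - (i + 1) * delta α a) ∧
      s (n + (a + 2) + j * (a + 1) + (a + 1)) = false := by
  have hδ := hQ.delta_pos
  have hfn := hE.le_of_true n hn
  have hshort : ∀ i < b, s (n + (a + 2) + i * (a + 1) + (a + 1)) = true := by
    intro i
    induction i using Nat.strong_induction_on with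
    | _ i ih =>
      intro hib
      obtain ⟨hi, hfi⟩ := hE.run_of_short_gaps hQ hn h fun i' hi' => ih i' hi' (by omega)
      refine hE.eq_true_of_lt ?_
      have : ((i : ℝ) + 2) * delta α a ≤ (b + 1) * delta α a :=
        mul_le_mul_of_nonneg_right (by exact_mod_cast (by omega : i + 2 ≤ b + 1)) hδ.le
      rw [hE.orbit_block hQ hi, hfi]
      linarith [hQ.mul_delta_lt]
  by_cases hb : s (n + (a + 2) + b * (a + 1) + (a + 1)) = true
  · have hgaps : ∀ i' < b + 1, s (n + (a + 2) + i' * (a + 1) + (a + 1)) = true := fun i' hi' =>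
      (Nat.lt_succ_iff_lt_or_eq.1 hi').elim (hshort i') fun h' => h' ▸ hb
    refine ⟨b + 1, Or.inr rfl, fun i hi => hE.run_of_short_gaps hQ hn h
      fun i' hi' => hgaps i' (by omega), Bool.eq_false_iff.2 fun hlast => ?_⟩
    obtain ⟨hb₁, hfb₁⟩ := hE.run_of_short_gaps hQ hn h hgaps
    have := hE.le_of_short_gap hQ hb₁ hlast
    push_cast at hfb₁
    linarith [hE.long_gap hQ hn h |>.1, hQ.lt_mul_delta]
  · exact ⟨b, Or.inl rfl, fun i hi => hE.run_of_short_gaps hQ hn h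
      fun i' hi' => hshort i' (by omega), by simpa using hb⟩

lemma occursAt_block_iff (hE : RotationCoding α s f) (hQ : QuotientBounds α a b) {g : ℕ}
    (hg : g ≤ a) : OccursAt s k (block g) ↔ s k = true := by
  rw [block, occursAt_cons, occursAt_replicate]
  exact ⟨And.left, fun hk => ⟨hk, fun i hi => hE.false_after_one hQ hk (by omega)⟩⟩

lemma occursAt_block_succ_iff (hE : RotationCoding α s f) (hQ : QuotientBounds α a b) :
    OccursAt s k (block (a + 1)) ↔ s k = true ∧ s (k + (a + 1)) = false := by
  rw [block, occursAt_cons, occursAt_replicate]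
  refine ⟨fun ⟨hk, hz⟩ => ⟨hk, by simpa [Nat.add_assoc, Nat.add_comm 1] using hz a (by omega)⟩,
    fun ⟨hk, hlast⟩ => ⟨hk, fun i hi => ?_⟩⟩
  rcases Nat.lt_succ_iff_lt_or_eq.1 hi with hi | rfl
  · exact hE.false_after_one hQ hk hi
  · simpa [Nat.add_assoc, Nat.add_comm 1] using hlast

lemma occursAt_longRun_iff (hE : RotationCoding α s f) (hQ : QuotientBounds α a b) {j : ℕ} :
    OccursAt s k (longRun a j) ↔
      s k = true ∧ s (k + (a + 1)) = false ∧ ∀ i < j, s (k + (a + 2) + i * (a + 1)) = true := by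
  rw [longRun, occursAt_append, hE.occursAt_block_succ_iff hQ, length_block,
    occursAt_flatten_replicate, and_assoc]
  simp only [hE.occursAt_block_iff hQ le_rfl, length_block]

lemma occursAt_W2_sq_iff (hE : RotationCoding α s f) (hQ : QuotientBounds α a b) :
    OccursAt s k (W2 a ++ W2 a) ↔
      s k = false ∧ s (k + 1) = true ∧ s (k + (a + 2)) = true := by
  obtain ⟨c, rfl⟩ : ∃ c, a = c + 1 := ⟨a - 1, by have := hQ.one_le; omega⟩
  have hW2 : W2 (c + 1) = false :: block c := rfl
  rw [hW2, List.cons_append, occursAt_cons, occursAt_append, occursAt_cons,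
    hE.occursAt_block_iff hQ (Nat.le_succ c), hE.occursAt_block_iff hQ (Nat.le_succ c),
    length_block, and_congr_right_iff]
  intro _
  constructor
  · rintro ⟨hk₁, -, hk₂⟩
    exact ⟨hk₁, by convert hk₂ using 2; omega⟩
  · rintro ⟨hk₁, hk₂⟩
    refine ⟨hk₁, ?_, by convert hk₂ using 2; omega⟩
    convert hE.false_after_one hQ hk₁ (Nat.lt_succ_self c) using 2; omega

lemma occursAt_W3_sq_iff (hE : RotationCoding α s f) (hQ : QuotientBounds α a b) :
    OccursAt s k (W3 a ++ W3 a) ↔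
      s k = false ∧ s (k + 1) = true ∧ s (k + (a + 2)) = false := by
  have hW3 : W3 a = false :: block a := rfl
  rw [hW3, List.cons_append, occursAt_cons, occursAt_append, occursAt_cons,
    hE.occursAt_block_iff hQ le_rfl, hE.occursAt_block_iff hQ le_rfl, length_block,
    and_congr_right_iff]
  intro _
  constructor
  · rintro ⟨hk₁, hk₂, -⟩
    exact ⟨hk₁, by convert hk₂ using 2; omega⟩
  · rintro ⟨hk₁, hk₂⟩
    have hk₂' : s (k + 1 + (a + 1)) = false := by convert hk₂ using 2; omega
    exact ⟨hk₁, hk₂', by convert (hE.long_gap hQ hk₁ hk₂').2.1 using 2; omega⟩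

lemma occursAt_W4_sq_iff (hE : RotationCoding α s f) (hQ : QuotientBounds α a b) :
    OccursAt s k (W4 a ++ W4 a) ↔ s k = true ∧ s (k + (a + 1)) = true := by
  rw [show W4 a = block a from rfl, occursAt_append, hE.occursAt_block_iff hQ le_rfl,
    hE.occursAt_block_iff hQ le_rfl, length_block]

lemma occursAt_longRun_sq (hE : RotationCoding α s f) (hQ : QuotientBounds α a b) {j : ℕ}
    (hj : j ≤ b + 1) (hk : s k = true) (hk' : s (k + (a + 1)) = false)
    (hrun : ∀ i ≤ j, s (k + (a + 2) + i * (a + 1)) = true)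
    (hend : s (k + (a + 2) + j * (a + 1) + (a + 1)) = false) :
    OccursAt s k (longRun a j ++ longRun a j) := by
  rw [occursAt_append, length_longRun, ← Nat.add_assoc, hE.occursAt_longRun_iff hQ,
    hE.occursAt_longRun_iff hQ]
  obtain ⟨j', hj', hrun', -⟩ := hE.run_after_long_gap hQ (hrun j le_rfl) hend
  exact ⟨⟨hk, hk', fun i hi => hrun i hi.le⟩, hrun j le_rfl, hend,
    fun i hi => (hrun' i (by omega)).1⟩

lemma exists_occursAt_longRun_sq (hE : RotationCoding α s f) (hQ : QuotientBounds α a b)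
    (hk : s k = true) (hk' : s (k + (a + 1)) = false) :
    ∃ j, (j = b ∨ j = b + 1) ∧ OccursAt s k (longRun a j ++ longRun a j) ∧
      (f k + α - (b + 2) * delta α a < 1 - α → j = b) ∧
      (1 - α < f k + α - (b + 2) * delta α a → j = b + 1) := by
  obtain ⟨j, hj, hrun, hend⟩ := hE.run_after_long_gap hQ hk hk'
  obtain ⟨hb, hfb⟩ := hrun b (by omega)
  have hlast : f (k + (a + 2) + b * (a + 1) + (a + 1)) = f k + α - (b + 2) * delta α a := by
    rw [hE.orbit_block hQ hb, hfb]; ring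
  refine ⟨j, hj, hE.occursAt_longRun_sq hQ (by omega) hk hk' (fun i hi => (hrun i hi).1) hend,
    fun hlt => ?_, fun hlt => ?_⟩
  · rcases hj with rfl | rfl
    · rfl
    · have h := (hrun (b + 1) le_rfl).1
      rw [show k + (a + 2) + (b + 1) * (a + 1) = k + (a + 2) + b * (a + 1) + (a + 1) by ring,
        hE.eq_false_of_lt (hlast ▸ hlt)] at h
      simp at h
  · rcases hj with rfl | rfl
    · rw [hE.eq_true_of_lt (hlast ▸ hlt)] at hend
      simp at hend
    · rfl

lemma le_period_of_true (hE : RotationCoding α s f) (hQ : QuotientBounds α a b)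
    (hk : s k = true) (hP : 0 < P) (hper : ∀ i < P, s (k + P + i) = s (k + i)) :
    a + 1 ≤ P := by
  by_contra hlt
  have h := hE.false_after_one hQ hk (t := P - 1) (by omega)
  rw [show k + 1 + (P - 1) = k + P + 0 by omega, hper 0 hP, Nat.add_zero, hk] at h
  simp at h

lemma le_period_of_false_true (hE : RotationCoding α s f) (hQ : QuotientBounds α a b)
    (hk : s k = false) (hk₁ : s (k + 1) = true) (hP : 0 < P)
    (hper : ∀ i < P, s (k + P + i) = s (k + i)) : a + 1 ≤ P := by
  have hP₁ : 1 < P := by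
    by_contra hP₁
    have h := hper 0 hP
    simp [show P = 1 by omega, hk, hk₁] at h
  by_contra hlt
  have h := hE.false_after_one hQ hk₁ (t := P - 1) (by omega)
  rw [show k + 1 + 1 + (P - 1) = k + P + 1 by omega, hper 1 hP₁, hk₁] at h
  simp at h

lemma le_period_of_false_true_false (hE : RotationCoding α s f) (hQ : QuotientBounds α a b)
    (hk : s k = false) (hk₁ : s (k + 1) = true) (hk₂ : s (k + (a + 2)) = false) (hP : 0 < P)
    (hper : ∀ i < P, s (k + P + i) = s (k + i)) : a + 2 ≤ P := by
  have := hE.le_period_of_false_true hQ hk hk₁ hP hper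
  have := hQ.one_le
  by_contra hlt
  have h := hper 1 (by omega)
  rw [show k + P + 1 = k + (a + 2) by omega, hk₁, hk₂] at h
  simp at h

/-- A period `P` carries the block `10^(a+1)` at `k` to a block `10^(a+1)` at `k + P`, and the
first such block after `k` starts at `k + (a + 2) + j * (a + 1)`. -/
lemma le_period_of_long_gap (hE : RotationCoding α s f) (hQ : QuotientBounds α a b) {j : ℕ}
    (hk : s k = true) (hk' : s (k + (a + 1)) = false)
    (hrun : ∀ i ≤ j, s (k + (a + 2) + i * (a + 1)) = true) (hP : 0 < P)
    (hper : ∀ i < P, s (k + P + i) = s (k + i)) : a + 2 + j * (a + 1) ≤ P := by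
  have hPa := hE.le_period_of_true hQ hk hP hper
  have hstart : s (k + P) = true := by simpa [hk] using hper 0 hP
  have hPa' : a + 1 < P := by
    refine hPa.lt_of_ne fun h => ?_
    rw [← h, hk'] at hstart
    simp at hstart
  have hend : s (k + P + (a + 1)) = false := by rw [hper (a + 1) hPa', hk']
  by_contra hlt
  obtain ⟨q, r, hr, hPqr⟩ : ∃ q r, r < a + 1 ∧ P = a + 2 + q * (a + 1) + r :=
    ⟨(P - (a + 2)) / (a + 1), (P - (a + 2)) % (a + 1), Nat.mod_lt _ (by omega), by
      have := Nat.div_add_mod' (P - (a + 2)) (a + 1); omega⟩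
  have hq : q < j := by
    by_contra hq
    have : j * (a + 1) ≤ q * (a + 1) := Nat.mul_le_mul_right _ (by omega)
    omega
  rcases Nat.eq_zero_or_pos r with rfl | hr₀
  · have h := hrun (q + 1) hq
    rw [show k + (a + 2) + (q + 1) * (a + 1) = k + P + (a + 1) by rw [hPqr]; ring, hend] at h
    simp at h
  · have h := hE.false_after_one hQ (hrun q hq.le) (t := r - 1) (by omega)
    rw [show k + (a + 2) + q * (a + 1) + 1 + (r - 1) = k + P by omega, hstart] at h
    simp at h

lemma length_longRun_le_period (hE : RotationCoding α s f) (hQ : QuotientBounds α a b) {j : ℕ}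
    (hocc : OccursAt s k (longRun a j ++ longRun a j)) (hP : 0 < P)
    (hper : ∀ i < P, s (k + P + i) = s (k + i)) : (longRun a j).length ≤ P := by
  rw [occursAt_append, length_longRun, ← Nat.add_assoc, hE.occursAt_longRun_iff hQ,
    hE.occursAt_longRun_iff hQ] at hocc
  obtain ⟨⟨hk, hk', hrun⟩, hlast, -⟩ := hocc
  rw [length_longRun]
  refine hE.le_period_of_long_gap hQ hk hk' (fun i hi => ?_) hP hper
  rcases hi.lt_or_eq with hi | rfl
  exacts [hrun i hi, hlast]

lemma length_le_period (hE : RotationCoding α s f) (hQ : QuotientBounds α a b)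
    (hv : v ∈ sixRoots a b) (hocc : OccursAt s k (v ++ v)) (hP : 0 < P)
    (hper : ∀ i < P, s (k + P + i) = s (k + i)) : v.length ≤ P := by
  rcases hv with rfl | rfl | rfl | rfl | rfl | rfl
  · exact hP
  · obtain ⟨hk, hk₁, -⟩ := (hE.occursAt_W2_sq_iff hQ).1 hocc
    have := hE.le_period_of_false_true hQ hk hk₁ hP hper
    have := hQ.one_le
    simp only [W2, List.length_cons, List.length_replicate]
    omega
  · obtain ⟨hk, hk₁, hk₂⟩ := (hE.occursAt_W3_sq_iff hQ).1 hocc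
    have := hE.le_period_of_false_true_false hQ hk hk₁ hk₂ hP hper
    simp only [W3, List.length_cons, List.length_replicate]
    omega
  · simpa [W4] using hE.le_period_of_true hQ ((hE.occursAt_W4_sq_iff hQ).1 hocc).1 hP hper
  · rw [W5_eq_longRun] at hocc ⊢
    exact hE.length_longRun_le_period hQ hocc hP hper
  · rw [W6_eq_longRun] at hocc ⊢
    exact hE.length_longRun_le_period hQ hocc hP hper

lemma exists_mem_sixRoots_occursAt (hE : RotationCoding α s f) (hQ : QuotientBounds α a b)
    (k : ℕ) : ∃ v ∈ sixRoots a b, OccursAt s k (v ++ v) := by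
  cases hk : s k with
  | false =>
    cases hk₁ : s (k + 1) with
    | false => exact ⟨W1, by simp [sixRoots], occursAt_W1_sq_iff.2 ⟨hk, hk₁⟩⟩
    | true =>
      cases hk₂ : s (k + (a + 2)) with
      | false => exact ⟨W3 a, by simp [sixRoots], (hE.occursAt_W3_sq_iff hQ).2 ⟨hk, hk₁, hk₂⟩⟩
      | true => exact ⟨W2 a, by simp [sixRoots], (hE.occursAt_W2_sq_iff hQ).2 ⟨hk, hk₁, hk₂⟩⟩
  | true =>
    cases hk' : s (k + (a + 1)) with
    | true => exact ⟨W4 a, by simp [sixRoots], (hE.occursAt_W4_sq_iff hQ).2 ⟨hk, hk'⟩⟩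
    | false =>
      obtain ⟨j, hj, hocc, -⟩ := hE.exists_occursAt_longRun_sq hQ hk hk'
      rcases hj with rfl | rfl
      · exact ⟨W5 a j, by simp [sixRoots], W5_eq_longRun a j ▸ hocc⟩
      · exact ⟨W6 a b, by simp [sixRoots], W6_eq_longRun a b ▸ hocc⟩

lemma exists_mem_sixRoots_sq_prefix (hE : RotationCoding α s f) (hQ : QuotientBounds α a b)
    (hu : u ≠ []) (hocc : OccursAt s k (u ++ u)) : ∃ v ∈ sixRoots a b, v ++ v <+: u ++ u := by
  obtain ⟨v, hv, hvocc⟩ := hE.exists_mem_sixRoots_occursAt hQ k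
  have := hE.length_le_period hQ hv hvocc (List.length_pos_iff.2 hu) hocc.periodic
  exact ⟨v, hv, hvocc.prefix_of_length_le hocc (by simp only [List.length_append]; omega)⟩

lemma sq_eq_of_sq_prefix (hE : RotationCoding α s f) (hQ : QuotientBounds α a b)
    (hv : v ∈ sixRoots a b) (hocc : OccursAt s k (v ++ v)) (hu : u ≠ [])
    (huv : u ++ u <+: v ++ v) : u ++ u = v ++ v := by
  have := hE.length_le_period hQ hv hocc (List.length_pos_iff.2 hu) (hocc.of_prefix huv).periodic
  have := huv.length_le
  exact huv.eq_of_length (by simp only [List.length_append] at *; omega)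

end RotationCoding

section Orbit

lemma fract_add_eq_ite {t c : ℝ} (hc : 0 ≤ c) (hc₁ : c < 1) :
    Int.fract (t + c) = Int.fract t + c - if 1 ≤ Int.fract t + c then 1 else 0 := by
  have := Int.fract_nonneg t
  have := Int.fract_lt_one t
  rw [Int.fract_eq_iff]
  split_ifs with h
  · exact ⟨by linarith, by linarith, ⌊t⌋ + 1, by push_cast; linarith [Int.floor_add_fract t]⟩
  · exact ⟨by linarith, by linarith, ⌊t⌋, by linarith [Int.floor_add_fract t]⟩

noncomputable def orbit (α x : ℝ) (n : ℕ) : ℝ := Int.fract (x + n * α)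

/-- The orbit coded by `sturmian'`: the point `{x + nα}`, taken in `(0, 1]` instead of `[0, 1)`. -/
noncomputable def orbit' (α x : ℝ) (n : ℕ) : ℝ := 1 - Int.fract (-(x + n * α))

variable {α x : ℝ}

lemma orbit_zero (hx : x ∈ Set.Ico (0 : ℝ) 1) : orbit α x 0 = x := by
  simpa [orbit] using Int.fract_eq_self.2 hx

lemma sturmian_eq_true_iff {n : ℕ} : sturmian α x n = true ↔ 1 - α ≤ orbit α x n := by
  unfold sturmian orbit
  split_ifs with h <;> simp [h]

lemma sturmian'_eq_true_iff (h0 : 0 < α) {n : ℕ} :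
    sturmian' α x n = true ↔ 1 - α < orbit' α x n := by
  unfold sturmian' orbit'
  by_cases h : Int.fract (x + n * α) = 0
  · rw [Int.fract_neg_eq_zero.2 h]
    simp [h, h0]
  · rw [Int.fract_neg h, sub_sub_cancel]
    simp [h]

lemma rotationCoding_sturmian (h0 : 0 < α) (h1 : α < 1) :
    RotationCoding α (sturmian α x) (orbit α x) where
  le_one _ := (Int.fract_lt_one _).le
  le_of_true _ := sturmian_eq_true_iff.1
  le_of_false _ hn := le_of_not_ge fun h => by simp [sturmian_eq_true_iff.2 h] at hn
  succ n := by
    have e : x + ((n + 1 : ℕ) : ℝ) * α = x + n * α + α := by push_cast; ring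
    rw [orbit, orbit, e, fract_add_eq_ite h0.le h1]
    simp only [sturmian_eq_true_iff, orbit, sub_le_iff_le_add]

lemma rotationCoding_sturmian' (h0 : 0 < α) (h1 : α < 1) :
    RotationCoding α (sturmian' α x) (orbit' α x) where
  le_one _ := by simp [orbit', Int.fract_nonneg]
  le_of_true _ hn := ((sturmian'_eq_true_iff h0).1 hn).le
  le_of_false _ hn := le_of_not_gt fun h => by simp [(sturmian'_eq_true_iff h0).2 h] at hn
  succ n := by
    have e : -(x + ((n + 1 : ℕ) : ℝ) * α) = -(x + n * α) + (1 - α) - 1 := by push_cast; ring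
    rw [orbit', orbit', e, Int.fract_sub_one, fract_add_eq_ite (by linarith) (by linarith)]
    simp only [sturmian'_eq_true_iff h0, orbit']
    split_ifs <;> linarith

end Orbit

section Occurrences

variable {α : ℝ} {a b : ℕ}

lemma exists_occursAt_longRun_sq_sturmian (hQ : QuotientBounds α a b) {z : ℝ} (hz : 0 ≤ z)
    (hzg : z < delta α a) :
    ∃ j, (j = b ∨ j = b + 1) ∧ OccursAt (sturmian α (1 - α + z)) 0 (longRun a j ++ longRun a j) ∧
      (z + (α - (b + 1) * delta α a) < delta α a → j = b) ∧
      (delta α a < z + (α - (b + 1) * delta α a) → j = b + 1) := by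
  have hE : RotationCoding α (sturmian α (1 - α + z)) (orbit α (1 - α + z)) :=
    rotationCoding_sturmian hQ.pos hQ.lt_one
  have h₀ : orbit α (1 - α + z) 0 = 1 - α + z :=
    orbit_zero ⟨by linarith [hQ.lt_one], by linarith [hQ.delta_lt]⟩
  have hs₀ : sturmian α (1 - α + z) 0 = true := sturmian_eq_true_iff.2 (by linarith)
  have hs₁ : sturmian α (1 - α + z) (0 + (a + 1)) = false :=
    hE.eq_false_of_lt (by rw [hE.orbit_block hQ hs₀, h₀]; linarith)
  obtain ⟨j, hj, hocc, hb, hb₁⟩ := hE.exists_occursAt_longRun_sq hQ hs₀ hs₁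
  refine ⟨j, hj, hocc, fun h => hb ?_, fun h => hb₁ ?_⟩ <;> rw [h₀] <;> linarith

lemma exists_zero_one_sturmian (hQ : QuotientBounds α a b) {z : ℝ} (hz : 0 < z)
    (hzδ : z ≤ delta α a) :
    ∃ x ∈ Set.Ico (0 : ℝ) 1, sturmian α x 0 = false ∧ sturmian α x (0 + 1) = true ∧
      (sturmian α x (0 + (a + 2)) = true ↔ delta α a ≤ z) := by
  have hα := hQ.two_mul_lt_one
  have hδα := hQ.delta_lt
  have hx : 1 - 2 * α + z ∈ Set.Ico (0 : ℝ) 1 := ⟨by linarith, by linarith⟩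
  have hE : RotationCoding α (sturmian α (1 - 2 * α + z)) (orbit α (1 - 2 * α + z)) :=
    rotationCoding_sturmian hQ.pos hQ.lt_one
  have h₀ := orbit_zero (α := α) hx
  have hs₀ := hE.eq_false_of_lt (by rw [h₀]; linarith)
  have h₁ : orbit α (1 - 2 * α + z) (0 + 1) = 1 - α + z := by
    rw [hE.succ_of_false hs₀, h₀]; ring
  have hs₁ := sturmian_eq_true_iff.2 (by linarith : 1 - α ≤ orbit α (1 - 2 * α + z) (0 + 1))
  refine ⟨_, hx, hs₀, hs₁, ?_⟩
  rw [sturmian_eq_true_iff, show 0 + (a + 2) = 0 + 1 + (a + 1) by omega, hE.orbit_block hQ hs₁,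
    h₁]
  constructor <;> intro <;> linarith

lemma exists_occursAt_sq_sturmian (hQ : QuotientBounds α a b) {v : List Bool}
    (hv : v ∈ sixRoots a b) : ∃ x ∈ Set.Ico (0 : ℝ) 1, OccursAt (sturmian α x) 0 (v ++ v) := by
  have hE (x : ℝ) : RotationCoding α (sturmian α x) (orbit α x) :=
    rotationCoding_sturmian hQ.pos hQ.lt_one
  have hδ := hQ.delta_pos
  have hδα := hQ.delta_lt
  have hα := hQ.two_mul_lt_one
  have he : 0 < α - (b + 1) * delta α a := by linarith [hQ.mul_delta_lt]
  have heδ : α - (b + 1) * delta α a < delta α a := by linarith [hQ.lt_mul_delta]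
  rcases hv with rfl | rfl | rfl | rfl | rfl | rfl
  · have hx : (0 : ℝ) ∈ Set.Ico (0 : ℝ) 1 := ⟨le_rfl, one_pos⟩
    have h₀ : orbit α 0 0 < 1 - α := by rw [orbit_zero hx]; linarith
    have hs₀ := (hE 0).eq_false_of_lt h₀
    refine ⟨0, hx, occursAt_W1_sq_iff.2 ⟨hs₀, (hE 0).eq_false_of_lt ?_⟩⟩
    rw [(hE 0).succ_of_false hs₀, orbit_zero hx]; linarith
  · obtain ⟨x, hx, hs₀, hs₁, hs₂⟩ := exists_zero_one_sturmian hQ hδ le_rfl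
    exact ⟨x, hx, ((hE x).occursAt_W2_sq_iff hQ).2 ⟨hs₀, hs₁, hs₂.2 le_rfl⟩⟩
  · obtain ⟨x, hx, hs₀, hs₁, hs₂⟩ := exists_zero_one_sturmian hQ (half_pos hδ) (by linarith)
    refine ⟨x, hx, ((hE x).occursAt_W3_sq_iff hQ).2 ⟨hs₀, hs₁, ?_⟩⟩
    exact Bool.eq_false_iff.2 fun h => absurd (hs₂.1 h) (by linarith)
  · have hx : 1 - α + delta α a ∈ Set.Ico (0 : ℝ) 1 := ⟨by linarith, by linarith⟩
    have h₀ := orbit_zero (α := α) hx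
    have hs₀ := sturmian_eq_true_iff.2 (by linarith : 1 - α ≤ orbit α _ 0)
    refine ⟨_, hx, ((hE _).occursAt_W4_sq_iff hQ).2 ⟨hs₀, sturmian_eq_true_iff.2 ?_⟩⟩
    rw [(hE _).orbit_block hQ hs₀, h₀]; linarith
  · obtain ⟨j, -, hocc, hb, -⟩ :=
      exists_occursAt_longRun_sq_sturmian hQ (z := (delta α a - (α - (b + 1) * delta α a)) / 2)
        (by linarith) (by linarith)
    obtain rfl := hb (by linarith)
    exact ⟨_, ⟨by linarith, by linarith⟩, hocc⟩
  · obtain ⟨j, -, hocc, -, hb₁⟩ :=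
      exists_occursAt_longRun_sq_sturmian hQ (z := delta α a - (α - (b + 1) * delta α a) / 2)
        (by linarith) (by linarith)
    obtain rfl := hb₁ (by linarith)
    exact ⟨_, ⟨by linarith, by linarith⟩, hocc⟩

end Occurrences

end Sturmian

open Sturmian in
/-- for `α = [0; a₁, a₂, …]` with `a₁ ≥ 2`, set `a = a₁ − 1` and
`b = a₂ − 1`. Every Sturmian word of slope `α`, written as a product of minimal
squares `X₁²X₂²⋯`, has each minimal square root `X_n` among
`S₁ = 0`, `S₂ = 010^{a−1}`, `S₃ = 010^a`, `S₄ = 10^a`, `S₅ = 10^{a+1}(10^a)^b`,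
`S₆ = 10^{a+1}(10^a)^{b+1}`; in particular, exactly these six pairwise distinct
minimal squares occur in `L(α)`. -/
theorem six_minimal_squares (α : ℝ) (hα : Irrational α) (h0 : 0 < α) (h2 : α < 1 / 2)
    (a b : ℕ) (ha : (a : ℤ) = cfA α 1 - 1) (hb : (b : ℤ) = cfA α 2 - 1) :
    (∀ x ∈ Set.Ico (0 : ℝ) 1, ∀ s : ℕ → Bool,
      (s = sturmian α x ∨ s = sturmian' α x) →
      ∀ X : ℕ → List Bool, (∀ n, X n ≠ []) →
      (∀ n, ∀ v : List Bool, v ≠ [] → (v ++ v) <+: (X n ++ X n) → v = X n) →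
      (∀ n, IsPref (List.flatten ((List.range n).map fun i => X i ++ X i)) s) →
      ∀ n, X n ∈ ({W1, W2 a, W3 a, W4 a, W5 a b, W6 a b} : Set (List Bool))) ∧
    {w : List Bool | inLang α w ∧ (∃ u : List Bool, u ≠ [] ∧ w = u ++ u) ∧
        (∀ v : List Bool, v ≠ [] → (v ++ v) <+: w → v ++ v = w)} =
      ({W1 ++ W1, W2 a ++ W2 a, W3 a ++ W3 a, W4 a ++ W4 a,
        W5 a b ++ W5 a b, W6 a b ++ W6 a b} : Set (List Bool)) ∧
    List.Nodup [W1 ++ W1, W2 a ++ W2 a, W3 a ++ W3 a, W4 a ++ W4 a,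
        W5 a b ++ W5 a b, W6 a b ++ W6 a b] := by
  have hQ := quotientBounds_of_cfA hα h0 h2 ha hb
  have hE (x : ℝ) := rotationCoding_sturmian (x := x) h0 hQ.lt_one
  refine ⟨fun x _ s hs X hX hXmin hpref n => ?_, ?_, nodup_sixSquares hQ.one_le⟩
  · obtain ⟨f, hf⟩ : ∃ f, RotationCoding α s f := by
      rcases hs with rfl | rfl
      exacts [⟨_, hE x⟩, ⟨_, rotationCoding_sturmian' h0 hQ.lt_one⟩]
    have hpref' := hpref (n + 1)
    rw [List.range_succ, List.map_append, List.flatten_append, List.map_singleton,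
      List.flatten_singleton] at hpref'
    obtain ⟨v, hv, hvX⟩ := hf.exists_mem_sixRoots_sq_prefix hQ (hX n) hpref'.occursAt_right
    rwa [← hXmin n v (ne_nil_of_mem_sixRoots hv) hvX]
  · rw [sixSquares_eq_image]
    ext w
    constructor
    · rintro ⟨⟨x, -, k, hk⟩, ⟨u, hu, rfl⟩, hmin⟩
      obtain ⟨v, hv, hvu⟩ := (hE x).exists_mem_sixRoots_sq_prefix hQ hu hk
      exact ⟨v, hv, hmin v (ne_nil_of_mem_sixRoots hv) hvu⟩
    · rintro ⟨v, hv, rfl⟩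
      obtain ⟨x, hx, hocc⟩ := exists_occursAt_sq_sturmian hQ hv
      exact ⟨⟨x, hx, 0, hocc⟩, ⟨v, ne_nil_of_mem_sixRoots hv, rfl⟩,
        fun u hu huv => (hE x).sq_eq_of_sq_prefix hQ hv hocc hu huv⟩
end

section
/- The factorization of a word as a product of minimal squares is unique: if X₁²⋯X_n² = Y₁²⋯Y_m² where all X_i² and Y_j² are minimal squares, then n = m and X_i = Y_i for all i. -/
/-!
Two minimal squares starting a common word are prefix-comparable, and minimality of the longer
one forces them to coincide; cancelling that first square, induction on the factorization
finishes the argument.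
-/

namespace List

variable {α : Type*}

def IsMinimalSquareRoot (X : List α) : Prop :=
  X ≠ [] ∧ ∀ v : List α, v ≠ [] → (v ++ v) <+: (X ++ X) → v = X

theorem IsMinimalSquareRoot.eq_of_append_eq {X Y s t : List α} (hX : X.IsMinimalSquareRoot)
    (hY : Y.IsMinimalSquareRoot) (h : X ++ X ++ s = Y ++ Y ++ t) : X = Y := by
  have hXw : (X ++ X) <+: (Y ++ Y) ++ t := ⟨s, h⟩
  have hYw : (Y ++ Y) <+: (Y ++ Y) ++ t := prefix_append _ _
  rcases prefix_or_prefix_of_prefix hXw hYw with hXY | hYX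
  · exact hY.2 X hX.1 hXY
  · exact (hX.2 Y hY.1 hYX).symm

theorem eq_of_flatten_map_square_eq {Xs Ys : List (List α)}
    (hX : ∀ X ∈ Xs, X.IsMinimalSquareRoot) (hY : ∀ Y ∈ Ys, Y.IsMinimalSquareRoot)
    (h : (Xs.map fun X => X ++ X).flatten = (Ys.map fun Y => Y ++ Y).flatten) : Xs = Ys := by
  induction Xs generalizing Ys with
  | nil =>
    cases Ys with
    | nil => rfl
    | cons Y Ys =>
      simp only [map_cons, flatten_cons, map_nil, flatten_nil, nil_eq, append_eq_nil_iff] at h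
      exact absurd h.1.1 (hY Y mem_cons_self).1
  | cons X Xs ih =>
    cases Ys with
    | nil =>
      simp only [map_cons, flatten_cons, map_nil, flatten_nil, append_eq_nil_iff] at h
      exact absurd h.1.1 (hX X mem_cons_self).1
    | cons Y Ys =>
      simp only [map_cons, flatten_cons] at h
      obtain rfl : X = Y := (hX X mem_cons_self).eq_of_append_eq (hY Y mem_cons_self) h
      rw [ih (fun Z hZ => hX Z (mem_cons_of_mem _ hZ)) (fun Z hZ => hY Z (mem_cons_of_mem _ hZ))
        (append_cancel_left h)]

end List

/-- the factorization of a word as a product of minimal squares is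
unique: if `X₁²⋯X_n² = Y₁²⋯Y_m²` where each `X_i²` and `Y_j²` is a minimal square
(a square with no square as a proper prefix), then `n = m` and `X_i = Y_i` for all `i`. -/
theorem minimal_square_factorization_unique (Xs Ys : List (List Bool))
    (hX : ∀ X ∈ Xs, X ≠ [] ∧
      ∀ v : List Bool, v ≠ [] → (v ++ v) <+: (X ++ X) → v = X)
    (hY : ∀ Y ∈ Ys, Y ≠ [] ∧
      ∀ v : List Bool, v ≠ [] → (v ++ v) <+: (Y ++ Y) → v = Y)
    (h : (Xs.map fun X => X ++ X).flatten = (Ys.map fun Y => Y ++ Y).flatten) :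
    Xs = Ys :=
  List.eq_of_flatten_map_square_eq hX hY h
end

section
/- Backtracking lemma: Let a ≥ 1, b ≥ 0 and let S₁,…,S₆ be the six minimal square roots with parameters a, b. Let X, Y₁,…,Y_n be minimal square roots and let w be a word having both X² and Y₁²⋯Y_n² as suffixes. If |X| > |Y_n|, then |X| > |Y₁⋯Y_n| and Y₁⋯Y_n is a suffix of X. -/
def letterFromEnd (u : List Bool) (d : ℕ) : Bool := u.reverse.getD d false

section Letters

variable {u v : List Bool} {d : ℕ}

lemma letterFromEnd_nil (d : ℕ) : letterFromEnd [] d = false := rfl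

lemma letterFromEnd_append_of_lt (hd : d < v.length) :
    letterFromEnd (u ++ v) d = letterFromEnd v d := by
  unfold letterFromEnd
  rw [List.reverse_append]
  exact List.getD_append _ _ _ _ (by simpa using hd)

lemma letterFromEnd_append_length_add (u v : List Bool) (d : ℕ) :
    letterFromEnd (u ++ v) (v.length + d) = letterFromEnd u d := by
  unfold letterFromEnd
  rw [List.reverse_append, List.getD_append_right _ _ _ _ (by simp)]
  simp

lemma letterFromEnd_of_suffix (h : u <:+ v) (hd : d < u.length) :
    letterFromEnd u d = letterFromEnd v d := by
  obtain ⟨t, rfl⟩ := h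
  exact (letterFromEnd_append_of_lt hd).symm

lemma letterFromEnd_replicate_false (n d : ℕ) :
    letterFromEnd (List.replicate n false) d = false := by
  unfold letterFromEnd
  rw [List.reverse_replicate]
  by_cases h : d < n
  · exact List.getD_replicate _ h
  · exact List.getD_eq_default _ _ (by simpa using h)

lemma letterFromEnd_append_true_replicate (u : List Bool) (f d : ℕ) :
    letterFromEnd (u ++ true :: List.replicate f false) d = true ↔
      d = f ∨ (f < d ∧ letterFromEnd u (d - (f + 1)) = true) := by
  rw [show u ++ true :: List.replicate f false = u ++ [true] ++ List.replicate f false by simp]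
  rcases lt_or_ge d f with hd | hd
  · rw [letterFromEnd_append_of_lt (by simpa), letterFromEnd_replicate_false]
    simp only [Bool.false_eq_true, false_iff]
    omega
  obtain ⟨e, rfl⟩ := Nat.exists_eq_add_of_le hd
  have := letterFromEnd_append_length_add (u ++ [true]) (List.replicate f false) e
  rw [List.length_replicate] at this
  rw [this]
  rcases e with _ | e
  · simp [letterFromEnd]
  · rw [show e + 1 = [true].length + e by simp [add_comm], letterFromEnd_append_length_add]
    simp only [List.length_singleton]
    constructor
    · intro h
      exact Or.inr ⟨by omega, by rwa [show f + (1 + e) - (f + 1) = e by omega]⟩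
    · rintro (h | ⟨-, h⟩)
      · omega
      · rwa [show f + (1 + e) - (f + 1) = e by omega] at h

end Letters

/-- `Y²`, ending `2t` letters before the end of `X²`, agrees with `X²` wherever they overlap. -/
def SqAgree (Y X : List Bool) (t : ℕ) : Prop :=
  ∀ d < 2 * Y.length, d + 2 * t < 2 * X.length →
    letterFromEnd (Y ++ Y) d = letterFromEnd (X ++ X) (d + 2 * t)

lemma length_flatten_map_sq (Ys : List (List Bool)) :
    (Ys.map fun Y => Y ++ Y).flatten.length = 2 * Ys.flatten.length := by
  induction Ys with
  | nil => rfl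
  | cons Y Ys ih => simp only [List.map_cons, List.flatten_cons, List.length_append, ih]; ring

theorem backtracking_induction {R : Set (List Bool)} (hR : [] ∉ R) {X w : List Bool}
    (hXw : X ++ X <:+ w) (P : List Bool → Prop) (hnil : P [])
    (hstep : ∀ s Y, P s → Y ∈ R → (s = [] → Y.length < X.length) → SqAgree Y X s.length →
      P (Y ++ s))
    (Ys : List (List Bool)) (hY : ∀ Y ∈ Ys, Y ∈ R)
    (hw : (Ys.map fun Y => Y ++ Y).flatten <:+ w)
    (hlast : ∀ h : Ys ≠ [], (Ys.getLast h).length < X.length) : P Ys.flatten := by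
  induction Ys with
  | nil => exact hnil
  | cons Y Ys ih =>
    have hw' : (Y ++ Y) ++ (Ys.map fun Y => Y ++ Y).flatten <:+ w := by simpa using hw
    have hYs : ∀ Z ∈ Ys, Z ∈ R := fun Z hZ => hY Z (List.mem_cons_of_mem _ hZ)
    have hs : P Ys.flatten := ih hYs ((List.suffix_append _ _).trans hw')
      (fun h => by simpa [List.getLast_cons h] using hlast (List.cons_ne_nil _ _))
    refine hstep _ Y hs (hY Y List.mem_cons_self) (fun h0 => ?_) (fun d hd hdX => ?_)
    · obtain rfl : Ys = [] := List.eq_nil_iff_forall_not_mem.mpr fun Z hZ =>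
        hR (List.flatten_eq_nil_iff.mp h0 Z hZ ▸ hYs Z hZ)
      simpa using hlast (List.cons_ne_nil _ _)
    · have hlen := length_flatten_map_sq Ys
      calc letterFromEnd (Y ++ Y) d
          = letterFromEnd ((Y ++ Y) ++ (Ys.map fun Y => Y ++ Y).flatten)
              ((Ys.map fun Y => Y ++ Y).flatten.length + d) :=
            (letterFromEnd_append_length_add _ _ d).symm
        _ = letterFromEnd w (d + 2 * Ys.flatten.length) := by
            rw [letterFromEnd_of_suffix hw' (by simp only [List.length_append]; omega), hlen,
              add_comm]
        _ = letterFromEnd (X ++ X) (d + 2 * Ys.flatten.length) :=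
            (letterFromEnd_of_suffix hXw (by simp only [List.length_append]; omega)).symm

def zerosOneZeros (p f : ℕ) : List Bool := List.replicate p false ++ true :: List.replicate f false

section SingleOne

variable {p f : ℕ}

lemma length_zerosOneZeros : (zerosOneZeros p f).length = p + f + 1 := by
  simp only [zerosOneZeros, List.length_append, List.length_replicate, List.length_cons]
  omega

lemma letterFromEnd_zerosOneZeros (d : ℕ) :
    letterFromEnd (zerosOneZeros p f) d = true ↔ d = f := by
  simp [zerosOneZeros, letterFromEnd_append_true_replicate, letterFromEnd_replicate_false]

lemma letterFromEnd_zerosOneZeros_sq (d : ℕ) :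
    letterFromEnd (zerosOneZeros p f ++ zerosOneZeros p f) d = true ↔
      d = f ∨ d = f + (p + f + 1) := by
  rcases lt_or_ge d (zerosOneZeros p f).length with hd | hd
  · rw [letterFromEnd_append_of_lt hd, letterFromEnd_zerosOneZeros]
    rw [length_zerosOneZeros] at hd
    omega
  · obtain ⟨e, rfl⟩ := Nat.exists_eq_add_of_le hd
    rw [letterFromEnd_append_length_add, letterFromEnd_zerosOneZeros, length_zerosOneZeros]
    omega

lemma not_sqAgree_zerosOneZeros {v : List Bool} {g j : ℕ} (hfg : f ≤ g + 1) (hj : 2 * j ≤ f)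
    (hguard : j = 0 → (v ++ true :: List.replicate g false).length < (zerosOneZeros p f).length) :
    ¬ SqAgree (v ++ true :: List.replicate g false) (zerosOneZeros p f) j := by
  set Y := v ++ true :: List.replicate g false
  intro h
  have hY := letterFromEnd_append_true_replicate v g
  have hYlen : Y.length = v.length + g + 1 := by
    simp only [Y, List.length_append, List.length_cons, List.length_replicate]; omega
  have hX := letterFromEnd_zerosOneZeros_sq (p := p) (f := f)
  have hXlen := length_zerosOneZeros (p := p) (f := f)
  rcases lt_or_ge f g with hgf | hgf
  · -- `X²` has its last `1` at `f`, where `Y²` is still `0`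
    have e := h (f - 2 * j) (by omega) (by omega)
    rw [letterFromEnd_append_of_lt (by omega), Nat.sub_add_cancel hj] at e
    have := (hY _).mp (e.trans ((hX f).mpr (Or.inl rfl)))
    omega
  · have e := h g (by omega) (by omega)
    rw [letterFromEnd_append_of_lt (by omega)] at e
    have := (hX _).mp (e.symm.trans ((hY g).mpr (Or.inl rfl)))
    obtain rfl : j = 0 := by omega
    have hlt := hguard rfl
    -- the last `1` of the first copy of `Y` falls strictly inside the second copy of `X`
    have e' := h (Y.length + g) (by omega) (by omega)
    rw [letterFromEnd_append_length_add] at e'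
    have := (hX _).mp (e'.symm.trans ((hY g).mpr (Or.inl rfl)))
    omega

theorem backtrack_zerosOneZeros {R : Set (List Bool)}
    (hR : ∀ Y ∈ R, Y = [false] ∨ ∃ v g, f ≤ g + 1 ∧ Y = v ++ true :: List.replicate g false)
    {w : List Bool} (hXw : zerosOneZeros p f ++ zerosOneZeros p f <:+ w)
    (Ys : List (List Bool)) (hY : ∀ Y ∈ Ys, Y ∈ R) (hw : (Ys.map fun Y => Y ++ Y).flatten <:+ w)
    (hlast : ∀ h : Ys ≠ [], (Ys.getLast h).length < (zerosOneZeros p f).length) :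
    Ys.flatten.length < (zerosOneZeros p f).length ∧ Ys.flatten <:+ zerosOneZeros p f := by
  have hnil : [] ∉ R := fun h => by rcases hR [] h with h | ⟨v, g, -, h⟩ <;> simp at h
  have hstep : ∀ s Y, (∃ j, s = List.replicate j false ∧ 2 * j ≤ f) → Y ∈ R →
      (s = [] → Y.length < (zerosOneZeros p f).length) → SqAgree Y (zerosOneZeros p f) s.length →
      ∃ j, Y ++ s = List.replicate j false ∧ 2 * j ≤ f := by
    rintro s Y ⟨j, rfl, hj⟩ hYR hguard h
    rw [List.length_replicate] at h
    rcases hR Y hYR with rfl | ⟨v, g, hfg, rfl⟩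
    · have hX := letterFromEnd_zerosOneZeros_sq (p := p) (f := f)
      have hXlen := length_zerosOneZeros (p := p) (f := f)
      have n0 : ¬ (0 + 2 * j = f ∨ 0 + 2 * j = f + (p + f + 1)) := fun hc =>
        absurd ((h 0 (by simp) (by omega)).trans ((hX _).mpr hc)) (by decide)
      have n1 : ¬ (1 + 2 * j = f ∨ 1 + 2 * j = f + (p + f + 1)) := fun hc =>
        absurd ((h 1 (by simp) (by omega)).trans ((hX _).mpr hc)) (by decide)
      exact ⟨j + 1, by simp [List.replicate_succ], by omega⟩
    · exact absurd h (not_sqAgree_zerosOneZeros hfg hj (fun hj0 => hguard (by simp [hj0])))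
  obtain ⟨j, hs, hj⟩ := backtracking_induction hnil hXw _ ⟨0, rfl, Nat.zero_le _⟩ hstep Ys hY hw hlast
  rw [hs, length_zerosOneZeros]
  exact ⟨by rw [List.length_replicate]; omega, List.suffix_append_of_suffix
    ((List.suffix_replicate_iff.mpr ⟨by rw [List.length_replicate]; omega, by simp⟩).trans
      (List.suffix_cons _ _))⟩

end SingleOne

def minRoots (a b : ℕ) : Set (List Bool) := {W1, W2 a, W3 a, W4 a, W5 a b, W6 a b}

/-- `S₅ = longRoot a b` and `S₆ = longRoot a (b + 1)`. -/
def longRoot (a c : ℕ) : List Bool :=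
  (true :: List.replicate (a + 1) false) ++ (List.replicate c (W4 a)).flatten

section LongRoot

variable {a c : ℕ}

lemma longRoot_add (a m k : ℕ) :
    longRoot a (m + k) = longRoot a m ++ (List.replicate k (W4 a)).flatten := by
  simp only [longRoot, List.replicate_add, List.flatten_append, List.append_assoc]

lemma length_longRoot (a c : ℕ) : (longRoot a c).length = (c + 1) * (a + 1) + 1 := by
  simp only [longRoot, W4, List.length_append, List.length_cons, List.length_replicate,
    List.length_flatten, List.map_replicate, List.sum_replicate, smul_eq_mul]
  ring

lemma exists_longRoot_eq_append (a c : ℕ) :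
    ∃ v g, a ≤ g ∧ longRoot a c = v ++ true :: List.replicate g false := by
  rcases c with _ | c
  · exact ⟨[], a + 1, by omega, by simp [longRoot]⟩
  · exact ⟨longRoot a c, a, le_rfl, longRoot_add a c 1 ▸ by simp [W4]⟩

lemma eq_singleton_false_or_of_mem_minRoots {b : ℕ} {Y : List Bool} (ha : 1 ≤ a)
    (hY : Y ∈ minRoots a b) :
    Y = [false] ∨ ∃ v g, a ≤ g + 1 ∧ Y = v ++ true :: List.replicate g false := by
  simp only [minRoots, Set.mem_insert_iff, Set.mem_singleton_iff] at hY
  rcases hY with rfl | rfl | rfl | rfl | rfl | rfl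
  · exact Or.inl rfl
  · exact Or.inr ⟨[false], a - 1, by omega, rfl⟩
  · exact Or.inr ⟨[false], a, by omega, rfl⟩
  · exact Or.inr ⟨[], a, by omega, rfl⟩
  all_goals
    obtain ⟨v, g, hg, h⟩ := exists_longRoot_eq_append a _
    exact Or.inr ⟨v, g, by omega, h⟩

lemma nil_not_mem_minRoots {b : ℕ} (ha : 1 ≤ a) : [] ∉ minRoots a b := fun h => by
  rcases eq_singleton_false_or_of_mem_minRoots ha h with h | ⟨v, g, -, h⟩ <;> simp at h

/-! Positions in `longRoot a c` are written as `q * (a + 1) + r` with `r ≤ a`. -/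

lemma letterFromEnd_longRoot {q r : ℕ} (hr : r ≤ a) :
    letterFromEnd (longRoot a c) (q * (a + 1) + r) = true ↔
      (r = a ∧ q < c) ∨ (r = 0 ∧ q = c + 1) := by
  induction c generalizing q with
  | zero =>
    rw [show longRoot a 0 = [] ++ true :: List.replicate (a + 1) false by simp [longRoot],
      letterFromEnd_append_true_replicate]
    simp only [letterFromEnd_nil, Bool.false_eq_true, and_false, or_false]
    rcases q with _ | _ | q
    · omega
    · omega
    · have : (q + 1 + 1) * (a + 1) = q * (a + 1) + 2 * (a + 1) := by ring
      omega
  | succ c ih =>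
    rw [longRoot_add a c 1, List.replicate_one, List.flatten_singleton]
    rcases q with _ | q
    · rw [zero_mul, zero_add, letterFromEnd_append_of_lt
        (by simp only [W4, List.length_cons, List.length_replicate]; omega),
        show W4 a = [] ++ true :: List.replicate a false from rfl,
        letterFromEnd_append_true_replicate]
      simp only [letterFromEnd_nil, Bool.false_eq_true, and_false, or_false]
      omega
    · rw [show (q + 1) * (a + 1) + r = (W4 a).length + (q * (a + 1) + r) by
        simp only [W4, List.length_cons, List.length_replicate]; ring,
        letterFromEnd_append_length_add, ih]
      omega

lemma letterFromEnd_longRoot_sq {q r : ℕ} (ha : 1 ≤ a) (hr : r ≤ a) :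
    letterFromEnd (longRoot a c ++ longRoot a c) (q * (a + 1) + r) = true ↔
      (r = a ∧ q < c) ∨ (r = 0 ∧ c < q ∧ q ≤ 2 * c + 1) ∨ (r = 1 ∧ q = 2 * c + 2) := by
  have hL := length_longRoot a c
  have hc : (c + 1) * (a + 1) = c * (a + 1) + (a + 1) := Nat.succ_mul _ _
  rcases le_or_gt q c with hq | hq
  · have := Nat.mul_le_mul_right (a + 1) hq
    rw [letterFromEnd_append_of_lt (by omega), letterFromEnd_longRoot hr]
    omega
  obtain ⟨q, rfl⟩ := Nat.exists_eq_add_of_lt hq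
  rcases Nat.eq_zero_or_pos r with rfl | hr1
  · rcases q with _ | q
    · have := letterFromEnd_longRoot (c := c) (q := c + 1) hr
      rw [Nat.add_zero] at this
      show letterFromEnd _ ((c + 1) * (a + 1)) = true ↔ _
      rw [letterFromEnd_append_of_lt (by omega), this]
      omega
    · rw [show (c + (q + 1) + 1) * (a + 1) + 0 = (longRoot a c).length + (q * (a + 1) + a) by
          rw [hL]; ring,
        letterFromEnd_append_length_add, letterFromEnd_longRoot le_rfl]
      omega
  · obtain ⟨r, rfl⟩ := Nat.exists_eq_add_of_le' hr1
    rw [show (c + q + 1) * (a + 1) + (r + 1) = (longRoot a c).length + (q * (a + 1) + r) by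
        rw [hL]; ring,
      letterFromEnd_append_length_add, letterFromEnd_longRoot (by omega)]
    omega

lemma lt_two_mul_length_longRoot {q r : ℕ} (hr : r ≤ a)
    (hq : q ≤ 2 * c + 1 ∨ (q = 2 * c + 2 ∧ r ≤ 1)) :
    q * (a + 1) + r < 2 * (longRoot a c).length := by
  rw [length_longRoot]
  rcases hq with hq | ⟨rfl, hr1⟩
  · have := Nat.mul_le_mul_right (a + 1) hq
    have : 2 * ((c + 1) * (a + 1) + 1) = (2 * c + 1) * (a + 1) + (a + 1) + 2 := by ring
    omega
  · have : 2 * ((c + 1) * (a + 1) + 1) = (2 * c + 2) * (a + 1) + 2 := by ring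
    omega

/-- Against a backtracked product of length `j + k * (a + 1)`, the letter of `Y²` at `d`, where
`d + 2 * j = q * (a + 1) + r`, faces block `q + 2 * k`, offset `r`, of `X²`. -/
lemma SqAgree.letterFromEnd_iff {Y : List Bool} {j k d q r : ℕ} (ha : 1 ≤ a)
    (h : SqAgree Y (longRoot a c) (j + k * (a + 1))) (hd : d < 2 * Y.length)
    (hpos : d + 2 * j = q * (a + 1) + r) (hr : r ≤ a)
    (hq : q + 2 * k ≤ 2 * c + 1 ∨ (q + 2 * k = 2 * c + 2 ∧ r ≤ 1)) :
    letterFromEnd (Y ++ Y) d = true ↔ (r = a ∧ q + 2 * k < c) ∨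
      (r = 0 ∧ c < q + 2 * k ∧ q + 2 * k ≤ 2 * c + 1) ∨ (r = 1 ∧ q + 2 * k = 2 * c + 2) := by
  have hshift : d + 2 * (j + k * (a + 1)) = (q + 2 * k) * (a + 1) + r := by
    rw [add_mul, mul_assoc]; omega
  rw [h d hd (hshift ▸ lt_two_mul_length_longRoot hr hq), hshift,
    letterFromEnd_longRoot_sq ha hr]

lemma SqAgree.longRoot_iff {e k q r : ℕ} (ha : 1 ≤ a)
    (h : SqAgree (longRoot a e) (longRoot a c) (0 + k * (a + 1))) (hr : r ≤ a)
    (hqY : q ≤ 2 * e + 1 ∨ (q = 2 * e + 2 ∧ r ≤ 1))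
    (hqX : q + 2 * k ≤ 2 * c + 1 ∨ (q + 2 * k = 2 * c + 2 ∧ r ≤ 1)) :
    (r = a ∧ q < e) ∨ (r = 0 ∧ e < q ∧ q ≤ 2 * e + 1) ∨ (r = 1 ∧ q = 2 * e + 2) ↔
      (r = a ∧ q + 2 * k < c) ∨ (r = 0 ∧ c < q + 2 * k ∧ q + 2 * k ≤ 2 * c + 1) ∨
        (r = 1 ∧ q + 2 * k = 2 * c + 2) :=
  (letterFromEnd_longRoot_sq ha hr).symm.trans
    (h.letterFromEnd_iff ha (lt_two_mul_length_longRoot hr hqY) (by omega) hr hqX)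

end LongRoot

def zerosBlocks (a j k : ℕ) : List Bool :=
  List.replicate j false ++ (List.replicate k (W4 a)).flatten

lemma length_zerosBlocks (a j k : ℕ) : (zerosBlocks a j k).length = j + k * (a + 1) := by
  simp [zerosBlocks, List.length_flatten, W4]

/-- The `(j, k)` for which `zerosBlocks a j k` can be backtracked against `X = longRoot a c`. -/
def LongState (a c j k : ℕ) : Prop :=
  k ≤ c ∧ 2 * j ≤ a + 1 ∧ (j = 0 → 2 * k ≤ c) ∧ (2 * j = a + 1 → c ≤ 2 * k)

namespace LongState

variable {a c j k : ℕ}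

lemma length_lt_and_suffix (ha : 1 ≤ a) (hI : LongState a c j k) :
    (zerosBlocks a j k).length < (longRoot a c).length ∧ zerosBlocks a j k <:+ longRoot a c := by
  obtain ⟨hk, hj, -, -⟩ := hI
  refine ⟨?_, ?_⟩
  · have := Nat.mul_le_mul_right (a + 1) hk
    rw [length_zerosBlocks, length_longRoot, Nat.succ_mul]
    omega
  · obtain ⟨v, g, hg, hv⟩ := exists_longRoot_eq_append a (c - k)
    rw [← Nat.sub_add_cancel hk, longRoot_add, hv, zerosBlocks]
    exact List.suffix_append_self_iff.mpr (List.suffix_append_of_suffix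
      ((List.suffix_replicate_iff.mpr ⟨by rw [List.length_replicate]; omega, by simp⟩).trans
        (List.suffix_cons _ _)))

lemma eq_zero_of_sqAgree_one_at {Y : List Bool} (ha : 1 ≤ a) (hI : LongState a c j k)
    (h : SqAgree Y (longRoot a c) (j + k * (a + 1))) (hd : a < 2 * Y.length)
    (hY : letterFromEnd (Y ++ Y) a = true) : j = 0 ∧ 2 * k < c := by
  obtain ⟨hk, hj, hj0, hja⟩ := hI
  rcases Nat.eq_zero_or_pos j with rfl | hj1
  · have := (h.letterFromEnd_iff ha hd (q := 0) (by omega) le_rfl (by omega)).mp hY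
    omega
  · have := (h.letterFromEnd_iff ha hd (q := 1) (r := 2 * j - 1) (by omega) (by omega)
      (by omega)).mp hY
    omega

lemma exists_cons_W1 (ha : 1 ≤ a) (hI : LongState a c j k)
    (h : SqAgree W1 (longRoot a c) (j + k * (a + 1))) :
    ∃ j' k', W1 ++ zerosBlocks a j k = zerosBlocks a j' k' ∧ LongState a c j' k' := by
  refine ⟨j + 1, k, by simp [zerosBlocks, W1, List.replicate_succ], ?_⟩
  obtain ⟨hk, hj, hj0, hja⟩ := hI
  have hW : ∀ d, ¬ letterFromEnd (W1 ++ W1) d = true := by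
    intro d; unfold letterFromEnd W1; rcases d with _ | _ | d <;> simp
  rcases (show 2 * j + 1 ≤ a ∨ 2 * j = a ∨ 2 * j = a + 1 by omega) with hj' | hj' | hj'
  · have := (h.letterFromEnd_iff ha (d := 1) (q := 0) (r := 2 * j + 1) (by simp [W1]) (by omega)
      hj' (by omega)).not.mp (hW 1)
    exact ⟨hk, by omega, by omega, by omega⟩
  · have := (h.letterFromEnd_iff ha (d := 0) (q := 0) (r := a) (by simp [W1]) (by omega)
      le_rfl (by omega)).not.mp (hW 0)
    have := (h.letterFromEnd_iff ha (d := 1) (q := 1) (r := 0) (by simp [W1]) (by omega)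
      (by omega) (by omega)).not.mp (hW 1)
    omega
  · have := (h.letterFromEnd_iff ha (d := 0) (q := 1) (r := 0) (by simp [W1]) (by omega)
      (by omega) (by omega)).not.mp (hW 0)
    omega

lemma exists_cons_W2 (ha : 1 ≤ a) (hI : LongState a c j k)
    (h : SqAgree (W2 a) (longRoot a c) (j + k * (a + 1))) :
    ∃ j' k', W2 a ++ zerosBlocks a j k = zerosBlocks a j' k' ∧ LongState a c j' k' := by
  obtain ⟨hk, hj, hj0, hja⟩ := hI
  have hW : ∀ d, letterFromEnd (W2 a ++ W2 a) d = true ↔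
      d = a - 1 ∨ d = a - 1 + (1 + (a - 1) + 1) := letterFromEnd_zerosOneZeros_sq (p := 1)
  have hlen : (W2 a).length = a + 1 := by
    simp only [W2, List.length_cons, List.length_replicate]; omega
  obtain ⟨rfl, hck⟩ : j = 1 ∧ c ≤ 2 * k := by
    rcases Nat.eq_zero_or_pos j with rfl | hj1
    · have := (h.letterFromEnd_iff ha (q := 0) (r := a - 1) (by omega) (by omega) (by omega)
        (by omega)).mp ((hW _).mpr (Or.inl rfl))
      omega
    · have := (h.letterFromEnd_iff ha (q := 1) (r := 2 * j - 2) (by omega) (by omega) (by omega)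
        (by omega)).mp ((hW _).mpr (Or.inl rfl))
      omega
  have := (h.letterFromEnd_iff ha (d := 2 * a) (q := 2) (r := 0) (by omega) (by omega) (by omega)
    (by omega)).mp ((hW _).mpr (by omega))
  refine ⟨1, k + 1, ?_, by omega, by omega, by omega, by omega⟩
  have : List.replicate (a - 1) false ++ [false] = List.replicate a false := by
    rw [← List.replicate_succ']; congr 1; omega
  simp [zerosBlocks, W2, W4, List.replicate_succ, ← this]

lemma exists_cons_W3 (ha : 1 ≤ a) (hI : LongState a c j k)
    (h : SqAgree (W3 a) (longRoot a c) (j + k * (a + 1))) :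
    ∃ j' k', W3 a ++ zerosBlocks a j k = zerosBlocks a j' k' ∧ LongState a c j' k' := by
  have hW : ∀ d, letterFromEnd (W3 a ++ W3 a) d = true ↔ d = a ∨ d = a + (1 + a + 1) :=
    letterFromEnd_zerosOneZeros_sq (p := 1)
  have hlen : (W3 a).length = a + 2 := by simp [W3]
  obtain ⟨rfl, hkc⟩ := hI.eq_zero_of_sqAgree_one_at ha h (by omega) ((hW a).mpr (Or.inl rfl))
  have := (h.letterFromEnd_iff ha (d := 2 * a + 2) (q := 2) (r := 0) (by omega) (by omega)
    (by omega) (by omega)).mp ((hW _).mpr (by omega))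
  exact ⟨1, k + 1, by simp [zerosBlocks, W3, W4, List.replicate_succ], by
    unfold LongState; omega⟩

lemma exists_cons_W4 (ha : 1 ≤ a) (hI : LongState a c j k)
    (h : SqAgree (W4 a) (longRoot a c) (j + k * (a + 1))) :
    ∃ j' k', W4 a ++ zerosBlocks a j k = zerosBlocks a j' k' ∧ LongState a c j' k' := by
  have hW : ∀ d, letterFromEnd (W4 a ++ W4 a) d = true ↔ d = a ∨ d = a + (0 + a + 1) :=
    letterFromEnd_zerosOneZeros_sq (p := 0)
  have hlen : (W4 a).length = a + 1 := by simp [W4]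
  obtain ⟨rfl, hkc⟩ := hI.eq_zero_of_sqAgree_one_at ha h (by omega) ((hW a).mpr (Or.inl rfl))
  have := (h.letterFromEnd_iff ha (d := 2 * a + 1) (q := 1) (r := a) (by omega) (by omega)
    le_rfl (by omega)).mp ((hW _).mpr (by omega))
  exact ⟨0, k + 1, by simp [zerosBlocks, List.replicate_succ], by unfold LongState; omega⟩

lemma not_sqAgree_longRoot {e : ℕ} (ha : 1 ≤ a) (hI : LongState a c j k)
    (hguard : j = 0 → k = 0 → (longRoot a e).length < (longRoot a c).length) :
    ¬ SqAgree (longRoot a e) (longRoot a c) (j + k * (a + 1)) := by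
  intro h
  have ⟨hk, hj, hj0, hja⟩ := hI
  have hY := fun q {r} (hr : r ≤ a) => letterFromEnd_longRoot_sq (c := e) (q := q) ha hr
  have hd := fun q {r} (hr : r ≤ a) => lt_two_mul_length_longRoot (c := e) (q := q) hr
  obtain rfl : j = 0 := by
    rcases Nat.eq_zero_or_pos e with rfl | he
    · have hY0 : ¬ letterFromEnd (longRoot a 0 ++ longRoot a 0) (0 * (a + 1) + 0) = true :=
        fun h' => by have := (hY 0 (Nat.zero_le a)).mp h'; omega
      rcases (show 2 * j ≤ a ∨ 2 * j = a + 1 by omega) with hj' | hj'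
      · have := (h.letterFromEnd_iff ha (hd 0 (Nat.zero_le a) (by omega)) (q := 0) (r := 2 * j)
          (by omega) hj' (by omega)).not.mp hY0
        have := (h.letterFromEnd_iff ha (hd 1 (Nat.zero_le a) (by omega)) (q := 1) (r := 2 * j)
          (by omega) hj' (by omega)).mp ((hY 1 (Nat.zero_le a)).mpr (by omega))
        omega
      · have := (h.letterFromEnd_iff ha (hd 0 (Nat.zero_le a) (by omega)) (q := 1) (r := 0)
          (by omega) (Nat.zero_le a) (by omega)).not.mp hY0
        omega
    · exact (hI.eq_zero_of_sqAgree_one_at ha h (by simpa using hd 0 le_rfl (by omega))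
        (by simpa using (hY 0 le_rfl).mpr (by omega))).1
  have hce : c ≤ 2 * k + e := by
    by_contra
    have := h.longRoot_iff ha (q := e) le_rfl (by omega) (by omega)
    omega
  have hce' : 2 * k + e ≤ c := by
    by_contra
    have := h.longRoot_iff ha (q := c - 2 * k) le_rfl (by omega) (by omega)
    omega
  rcases Nat.eq_zero_or_pos k with rfl | hk1
  · obtain rfl : c = e := by omega
    exact lt_irrefl _ (hguard rfl rfl)
  · -- the last letter `1` of `Y²` falls on a `0` of `X²`
    have := h.longRoot_iff ha (q := 2 * e + 2) ha (by omega) (by omega)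
    omega

lemma exists_cons {b : ℕ} {Y : List Bool} (ha : 1 ≤ a) (hI : LongState a c j k)
    (hY : Y ∈ minRoots a b) (hguard : j = 0 → k = 0 → Y.length < (longRoot a c).length)
    (h : SqAgree Y (longRoot a c) (j + k * (a + 1))) :
    ∃ j' k', Y ++ zerosBlocks a j k = zerosBlocks a j' k' ∧ LongState a c j' k' := by
  simp only [minRoots, Set.mem_insert_iff, Set.mem_singleton_iff] at hY
  rcases hY with rfl | rfl | rfl | rfl | rfl | rfl
  · exact hI.exists_cons_W1 ha h
  · exact hI.exists_cons_W2 ha h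
  · exact hI.exists_cons_W3 ha h
  · exact hI.exists_cons_W4 ha h
  · exact absurd h (hI.not_sqAgree_longRoot (e := b) ha hguard)
  · exact absurd h (hI.not_sqAgree_longRoot (e := b + 1) ha hguard)

end LongState

theorem backtrack_longRoot {a b c : ℕ} (ha : 1 ≤ a) {w : List Bool}
    (hXw : longRoot a c ++ longRoot a c <:+ w) (Ys : List (List Bool))
    (hY : ∀ Y ∈ Ys, Y ∈ minRoots a b) (hw : (Ys.map fun Y => Y ++ Y).flatten <:+ w)
    (hlast : ∀ h : Ys ≠ [], (Ys.getLast h).length < (longRoot a c).length) :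
    Ys.flatten.length < (longRoot a c).length ∧ Ys.flatten <:+ longRoot a c := by
  have hstep : ∀ s Y, (∃ j k, s = zerosBlocks a j k ∧ LongState a c j k) → Y ∈ minRoots a b →
      (s = [] → Y.length < (longRoot a c).length) → SqAgree Y (longRoot a c) s.length →
      ∃ j k, Y ++ s = zerosBlocks a j k ∧ LongState a c j k := by
    rintro s Y ⟨j, k, rfl, hI⟩ hY hguard h
    rw [length_zerosBlocks] at h
    exact hI.exists_cons ha hY (fun hj hk => hguard (by simp [zerosBlocks, hj, hk])) h
  obtain ⟨j, k, hs, hI⟩ := backtracking_induction (nil_not_mem_minRoots ha) hXw _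
    ⟨0, 0, rfl, by unfold LongState; omega⟩ hstep Ys hY hw hlast
  exact hs ▸ hI.length_lt_and_suffix ha

/-- Backtracking lemma: let `S₁,…,S₆` be the six minimal square
roots with parameters `a ≥ 1`, `b ≥ 0`. If `X, Y₁,…,Y_n` are minimal square roots
and `w` has both `X²` and `Y₁²⋯Y_n²` as suffixes, and `|X| > |Y_n|`, then
`|X| > |Y₁⋯Y_n|` and `Y₁⋯Y_n` is a suffix of `X`. -/
theorem backtracking_lemma (a b : ℕ) (ha : 1 ≤ a)
    (X : List Bool) (Ys : List (List Bool)) (hYs : Ys ≠ []) (w : List Bool)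
    (hX : X ∈ ({W1, W2 a, W3 a, W4 a, W5 a b, W6 a b} : Set (List Bool)))
    (hY : ∀ Y ∈ Ys, Y ∈ ({W1, W2 a, W3 a, W4 a, W5 a b, W6 a b} : Set (List Bool)))
    (h1 : (X ++ X) <:+ w)
    (h2 : (Ys.map fun Y => Y ++ Y).flatten <:+ w)
    (h3 : (Ys.getLast hYs).length < X.length) :
    Ys.flatten.length < X.length ∧ Ys.flatten <:+ X := by
  have hR : ∀ f ≤ a, ∀ Y ∈ minRoots a b,
      Y = [false] ∨ ∃ v g, f ≤ g + 1 ∧ Y = v ++ true :: List.replicate g false :=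
    fun f hf Y hY => (eq_singleton_false_or_of_mem_minRoots ha hY).imp_right
      fun ⟨v, g, hg, h⟩ => ⟨v, g, by omega, h⟩
  simp only [Set.mem_insert_iff, Set.mem_singleton_iff] at hX
  rcases hX with rfl | rfl | rfl | rfl | rfl | rfl
  · have := List.length_pos_iff.mpr fun h =>
      nil_not_mem_minRoots (b := b) ha (h ▸ hY _ (List.getLast_mem hYs))
    exact absurd h3 (by rw [show W1.length = 1 from rfl]; omega)
  · exact backtrack_zerosOneZeros (p := 1) (f := a - 1) (hR _ (by omega)) h1 Ys hY h2 fun _ => h3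
  · exact backtrack_zerosOneZeros (p := 1) (f := a) (hR _ le_rfl) h1 Ys hY h2 fun _ => h3
  · exact backtrack_zerosOneZeros (p := 0) (f := a) (hR _ le_rfl) h1 Ys hY h2 fun _ => h3
  · exact backtrack_longRoot (c := b) ha h1 Ys hY h2 fun _ => h3
  · exact backtrack_longRoot (c := b + 1) ha h1 Ys hY h2 fun _ => h3
end

section
/- Let α ∈ (0,1/2) be irrational. If w = LS² where S = xyu and L = yxu for distinct letters x, y and some word u (i.e., L = L(S)), then w² contains both xux and yuy as factors; hence w² is not balanced and is not a factor of any Sturmian word. -/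
/-- A binary word is balanced if the numbers of occurrences of the letter `1`
in any two of its factors of equal length differ by at most `1`. -/
def BalancedWord (w : List Bool) : Prop :=
  ∀ u v : List Bool, u <:+: w → v <:+: w → u.length = v.length →
    ((u.count true : ℤ) - (v.count true : ℤ)).natAbs ≤ 1

lemma floor_step (β a : ℝ) (h0 : 0 ≤ β) (h1 : β < 1) :
    ⌊a + β⌋ = ⌊a⌋ + (if 1 - β ≤ Int.fract a then 1 else 0) := by
  have hf := Int.fract_nonneg a
  have hf1 := Int.fract_lt_one a
  have ha : (⌊a⌋ : ℝ) + Int.fract a = a := Int.floor_add_fract a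
  split_ifs with h
  · rw [Int.floor_eq_iff]
    constructor <;> push_cast <;> linarith
  · push_neg at h
    rw [add_zero, Int.floor_eq_iff]
    constructor <;> push_cast <;> linarith

lemma seg (β x : ℝ) (h0 : 0 ≤ β) (h1 : β < 1) (m n : ℕ) :
    (((List.range n).map (fun i => sturmian β x (m + i))).count true : ℤ)
      = ⌊x + (m + n : ℕ) * β⌋ - ⌊x + (m : ℕ) * β⌋ := by
  induction n with
  | zero => simp
  | succ n ih =>
    rw [List.range_succ, List.map_append, List.count_append]
    have e : x + ((m + (n+1) : ℕ) : ℝ) * β = (x + ((m + n : ℕ) : ℝ) * β) + β := by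
      push_cast; ring
    rw [e, floor_step β _ h0 h1]
    have : ([sturmian β x (m + n)].count true : ℤ)
        = if 1 - β ≤ Int.fract (x + ((m + n : ℕ) : ℝ) * β) then 1 else 0 := by
      unfold sturmian
      push_cast
      split_ifs <;> simp_all
    simp only [List.map_cons, List.map_nil]
    rw [Nat.cast_add, ih, this]
    ring

lemma floor_diff_bound (t a b : ℝ) :
    ((⌊a + t⌋ - ⌊a⌋) - (⌊b + t⌋ - ⌊b⌋)).natAbs ≤ 1 := by
  have h1 := Int.floor_le (a + t)
  have h2 := Int.lt_floor_add_one a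
  have h3 := Int.floor_le a
  have h4 := Int.lt_floor_add_one (a + t)
  have h5 := Int.floor_le (b + t)
  have h6 := Int.lt_floor_add_one b
  have h7 := Int.floor_le b
  have h8 := Int.lt_floor_add_one (b + t)
  have e1 : ((⌊a + t⌋ - ⌊a⌋) - (⌊b + t⌋ - ⌊b⌋) : ℤ) < 2 := by
    have : (((⌊a + t⌋ - ⌊a⌋) - (⌊b + t⌋ - ⌊b⌋) : ℤ) : ℝ) < 2 := by push_cast; linarith
    exact_mod_cast this
  have e2 : (-2 : ℤ) < ((⌊a + t⌋ - ⌊a⌋) - (⌊b + t⌋ - ⌊b⌋) : ℤ) := by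
    have : (-2 : ℝ) < (((⌊a + t⌋ - ⌊a⌋) - (⌊b + t⌋ - ⌊b⌋) : ℤ) : ℝ) := by push_cast; linarith
    exact_mod_cast this
  omega

lemma count_of_infix (β x : ℝ) (h0 : 0 ≤ β) (h1 : β < 1) (k : ℕ) (W v : List Bool)
    (hW : ∀ i < W.length, W.getD i false = sturmian β x (k + i))
    (hv : v <:+: W) :
    ∃ m : ℕ, (v.count true : ℤ) = ⌊x + ((m + v.length : ℕ) : ℝ) * β⌋ - ⌊x + (m : ℝ) * β⌋ := by
  obtain ⟨pre, suf, rfl⟩ := hv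
  refine ⟨k + pre.length, ?_⟩
  have hv_eq : v = (List.range v.length).map (fun i => sturmian β x (k + pre.length + i)) := by
    apply List.ext_getElem (by simp)
    intro i hi hi2
    have hlen : pre.length + i < (pre ++ v ++ suf).length := by
      simp at hi ⊢; omega
    have h := hW (pre.length + i) hlen
    rw [List.getD_eq_getElem _ _ hlen] at h
    have : (pre ++ v ++ suf)[pre.length + i]'hlen = v[i]'(by simpa using hi) := by
      have h1 : pre.length + i < (pre ++ v).length := by simp; omega
      rw [List.getElem_append_left h1, List.getElem_append_right (by omega)]
      simp
    rw [this] at h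
    simpa [Nat.add_assoc] using h
  have := seg β x h0 h1 (k + pre.length) v.length
  rw [hv_eq]
  convert this using 4
  exact (hv_eq ▸ rfl)

/-- if `w = L·S·S` where `S = xyu` and `L = yxu` for distinct
letters `x, y` (so `L = L(S)`), then `w²` contains both `xux` and `yuy` as
factors; hence `w²` is not balanced and is not a factor of any Sturmian word. -/
theorem gamma2_not_sturmian (α : ℝ) (hα : Irrational α) (h0 : 0 < α)
    (h2 : α < 1 / 2) (x y : Bool) (hxy : x ≠ y) (u S L w : List Bool)
    (hS : S = x :: y :: u) (hL : L = y :: x :: u) (hw : w = L ++ S ++ S) :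
    (x :: (u ++ [x])) <:+: (w ++ w) ∧
    (y :: (u ++ [y])) <:+: (w ++ w) ∧
    ¬ BalancedWord (w ++ w) ∧
    ∀ β : ℝ, Irrational β → β ∈ Set.Ioo (0 : ℝ) 1 → ¬ inLang β (w ++ w) := by
  subst hS hL hw
  set v1 := x :: (u ++ [x]) with hv1
  set v2 := y :: (u ++ [y]) with hv2
  have hin1 : v1 <:+: ((y :: x :: u ++ (x :: y :: u) ++ (x :: y :: u)) ++
      (y :: x :: u ++ (x :: y :: u) ++ (x :: y :: u))) := by
    refine ⟨[y], (y :: u) ++ (x :: y :: u) ++ (y :: x :: u ++ (x :: y :: u) ++ (x :: y :: u)), ?_⟩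
    simp [hv1]
  have hin2 : v2 <:+: ((y :: x :: u ++ (x :: y :: u) ++ (x :: y :: u)) ++
      (y :: x :: u ++ (x :: y :: u) ++ (x :: y :: u))) := by
    refine ⟨(y :: x :: u) ++ (x :: y :: u) ++ [x],
      (x :: u) ++ (x :: y :: u) ++ (x :: y :: u), ?_⟩
    simp [hv2]
  have hlen12 : v1.length = v2.length := by simp [hv1, hv2]
  have hcc : ((v1.count true : ℤ) - (v2.count true : ℤ)).natAbs = 2 := by
    clear hin1 hin2
    cases x <;> cases y <;>
      first
        | exact absurd rfl hxy
        | (simp only [hv1, hv2]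
           simp [List.count_cons, List.count_append]
           omega)
  refine ⟨hin1, hin2, ?_, ?_⟩
  · intro hB
    unfold BalancedWord at hB
    have := hB v1 v2 hin1 hin2 hlen12
    omega
  · rintro β hβ ⟨hβ0, hβ1⟩ hlang
    unfold inLang at hlang
    obtain ⟨z, hz, k, hW⟩ := hlang
    obtain ⟨m1, hm1⟩ := count_of_infix β z (le_of_lt hβ0) hβ1 k _ v1 hW hin1
    obtain ⟨m2, hm2⟩ := count_of_infix β z (le_of_lt hβ0) hβ1 k _ v2 hW hin2
    rw [hlen12] at hm1
    have e1 : (z + ((m1 + v2.length : ℕ) : ℝ) * β) = (z + (m1 : ℝ) * β) + v2.length * β := by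
      push_cast; ring
    have e2 : (z + ((m2 + v2.length : ℕ) : ℝ) * β) = (z + (m2 : ℝ) * β) + v2.length * β := by
      push_cast; ring
    rw [e1] at hm1
    rw [e2] at hm2
    have hbd := floor_diff_bound ((v2.length : ℝ) * β) (z + (m1 : ℝ) * β) (z + (m2 : ℝ) * β)
    omega
end
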